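/- arXiv:1911.12791 — 7 statements merged into one kernel-verified Lean document; each statement's English description precedes it below -/
import Mathlib

section
/- Every pure simplicial complex has a partition extender. That is, for every pure d-dimensional simplicial complex Δ there exists a pure d-dimensional simplicial complex Γ such that Δ ⊆ Γ, Γ is partitionable, and the relative complex (Γ, Δ) is partitionable. -/
/-- A simplicial complex on vertex set `ℕ`: a finite collection of finite sets of
vertices (faces) closed under taking subsets. -/
def IsComplex (Δ : Finset (Finset ℕ)) : Prop :=
  ∀ σ ∈ Δ, ∀ τ ⊆ σ, τ ∈ Δ

/-- `F` is a facet (maximal face) of `Δ`. -/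
def IsFacet (Δ : Finset (Finset ℕ)) (F : Finset ℕ) : Prop :=
  F ∈ Δ ∧ ∀ G ∈ Δ, F ⊆ G → F = G

/-- `Δ` is a pure `d`-dimensional complex: it is nonempty and every facet has
cardinality `d + 1` (i.e. dimension `d`). -/
def PureDim (Δ : Finset (Finset ℕ)) (d : ℤ) : Prop :=
  Δ.Nonempty ∧ ∀ F : Finset ℕ, IsFacet Δ F → (F.card : ℤ) = d + 1

/-- `S` is a partitioning of the set of faces `P` (ordered by inclusion) into Boolean
intervals topped by maximal elements of `P`.  Each pair `p ∈ S` represents the interval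
`[p.1, p.2]`; the intervals must be full Boolean intervals contained in `P`
(second condition), their tops must be maximal elements of `P` (first condition),
and every element of `P` must lie in exactly one interval (third condition). -/
def IsPartitioning (S : Finset (Finset ℕ × Finset ℕ)) (P : Finset (Finset ℕ)) : Prop :=
  (∀ p ∈ S, p.1 ⊆ p.2 ∧ p.2 ∈ P ∧ ∀ c ∈ P, p.2 ⊆ c → p.2 = c) ∧
  (∀ p ∈ S, ∀ e : Finset ℕ, p.1 ⊆ e → e ⊆ p.2 → e ∈ P) ∧
  (∀ e ∈ P, ∃! p : Finset ℕ × Finset ℕ, p ∈ S ∧ p.1 ⊆ e ∧ e ⊆ p.2)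

/-- A set of faces, ordered by inclusion, is partitionable if it admits a partitioning
into Boolean intervals whose maximum elements are maximal elements. -/
def Partitionable (P : Finset (Finset ℕ)) : Prop :=
  ∃ S : Finset (Finset ℕ × Finset ℕ), IsPartitioning S P

/-- The relative complex `(Δ, ⟨F⟩)`: the faces of `Δ` not contained in `F`. -/
def relF (Δ : Finset (Finset ℕ)) (F : Finset ℕ) : Finset (Finset ℕ) :=
  Δ.filter (fun τ => ¬ τ ⊆ F)

/-! Let `m = d + 1` and put fresh vertices above all vertices of `Δ`. The extender `Γ` consists of
the sets `σ ∪ ω` with `σ ∈ Δ` and `ω` a face of the boundary complex `C_k` of a `k`-dimensional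
cross-polytope on fresh vertices, `k = m - |σ|`. Grouping faces by their `Δ`-part `σ`, `Γ` is
partitioned by translating partitionings of the `C_k`, and `Γ \ Δ` by translating partitionings
of `C_k \ {∅}`, in both cases with all tops of size `k`; tops of size `m` are automatically
maximal, which also makes `Γ` pure.

`C_{k+1}` is the join of `C_k` with a new antipodal pair `{x, y}`. Its nonempty faces split into
classes `U⁺, U⁻` such that `U^±` and `U^± ∪ {∅}` are all partitionable, since
`U⁺_{k+1} = U⁻_k * {∅, x} ∪ (U⁺_k ∪ {∅}) * {x}` and
`U⁺_{k+1} ∪ {∅} = (U⁻_k ∪ {∅}) * {∅, x} ∪ U⁺_k * {x}` (symmetrically for `U⁻`), and joins of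
partitionings on disjoint vertex sets are partitionings. -/

open Finset
open scoped FinsetFamily

structure IsRankPartitioning (S : Finset (Finset ℕ × Finset ℕ)) (P : Finset (Finset ℕ)) (r : ℕ) :
    Prop where
  fst_subset_snd : ∀ p ∈ S, p.1 ⊆ p.2
  card_snd : ∀ p ∈ S, p.2.card = r
  mem_of_mem_interval : ∀ p ∈ S, ∀ e, p.1 ⊆ e → e ⊆ p.2 → e ∈ P
  exists_interval : ∀ e ∈ P, ∃ p ∈ S, p.1 ⊆ e ∧ e ⊆ p.2
  interval_unique : ∀ p ∈ S, ∀ q ∈ S, ∀ e, p.1 ⊆ e → e ⊆ p.2 → q.1 ⊆ e → e ⊆ q.2 → p = q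

def RankPartitionable (P : Finset (Finset ℕ)) (r : ℕ) : Prop :=
  ∃ S, IsRankPartitioning S P r

theorem isRankPartitioning_empty (r : ℕ) : IsRankPartitioning ∅ ∅ r :=
  ⟨by simp, by simp, by simp, by simp, by simp⟩

theorem isRankPartitioning_singleton (σ : Finset ℕ) :
    IsRankPartitioning {(σ, σ)} {σ} σ.card := by
  refine ⟨by simp, by simp, ?_, by simp, by simp⟩
  simp only [mem_singleton, forall_eq]
  exact fun e h1 h2 => Subset.antisymm h2 h1

theorem isRankPartitioning_pair (v : ℕ) : IsRankPartitioning {(∅, {v})} {∅, {v}} 1 := by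
  refine ⟨by simp, by simp, ?_, by simp, by simp⟩
  simp [subset_singleton_iff]

namespace IsRankPartitioning

variable {S T : Finset (Finset ℕ × Finset ℕ)} {P Q : Finset (Finset ℕ)} {r r' : ℕ}

theorem snd_mem (h : IsRankPartitioning S P r) {p} (hp : p ∈ S) : p.2 ∈ P :=
  h.mem_of_mem_interval p hp p.2 (h.fst_subset_snd p hp) Subset.rfl

theorem inter_snd_mem (h : IsRankPartitioning S P r) {p} (hp : p ∈ S) {e : Finset ℕ}
    (he : p.1 ⊆ e) : e ∩ p.2 ∈ P :=
  h.mem_of_mem_interval p hp _ (subset_inter he (h.fst_subset_snd p hp)) inter_subset_right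

theorem eq_snd_of_snd_subset (h : IsRankPartitioning S P r) {p} (hp : p ∈ S) {c} (hc : c ∈ P)
    (hpc : p.2 ⊆ c) : p.2 = c := by
  obtain ⟨q, hq, -, hcq⟩ := h.exists_interval c hc
  refine eq_of_subset_of_card_le hpc ?_
  rw [h.card_snd p hp, ← h.card_snd q hq]
  exact card_le_card hcq

theorem isPartitioning (h : IsRankPartitioning S P r) : IsPartitioning S P := by
  refine ⟨fun p hp => ⟨h.fst_subset_snd p hp, h.snd_mem hp,
    fun c hc => h.eq_snd_of_snd_subset hp hc⟩, h.mem_of_mem_interval, fun e he => ?_⟩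
  obtain ⟨p, hp, hpe⟩ := h.exists_interval e he
  exact ⟨p, ⟨hp, hpe⟩, fun q ⟨hq, hqe⟩ => h.interval_unique q hq p hp e hqe.1 hqe.2 hpe.1 hpe.2⟩

theorem card_of_isFacet (h : IsRankPartitioning S P r) {F : Finset ℕ} (hF : IsFacet P F) :
    F.card = r := by
  obtain ⟨p, hp, -, hFp⟩ := h.exists_interval F hF.1
  rw [hF.2 p.2 (h.snd_mem hp) hFp, h.card_snd p hp]

theorem union (h : IsRankPartitioning S P r) (h' : IsRankPartitioning T Q r)
    (hPQ : Disjoint P Q) : IsRankPartitioning (S ∪ T) (P ∪ Q) r := by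
  have mem_left := h.mem_of_mem_interval
  have mem_right := h'.mem_of_mem_interval
  refine ⟨?_, ?_, ?_, ?_, ?_⟩
  · simp only [mem_union]
    rintro p (hp | hp)
    exacts [h.fst_subset_snd p hp, h'.fst_subset_snd p hp]
  · simp only [mem_union]
    rintro p (hp | hp)
    exacts [h.card_snd p hp, h'.card_snd p hp]
  · simp only [mem_union]
    rintro p (hp | hp) e h1 h2
    exacts [Or.inl (mem_left p hp e h1 h2), Or.inr (mem_right p hp e h1 h2)]
  · simp only [mem_union]
    rintro e (he | he)
    · obtain ⟨p, hp, hpe⟩ := h.exists_interval e he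
      exact ⟨p, Or.inl hp, hpe⟩
    · obtain ⟨p, hp, hpe⟩ := h'.exists_interval e he
      exact ⟨p, Or.inr hp, hpe⟩
  · simp only [mem_union]
    rintro p (hp | hp) q (hq | hq) e hp1 hp2 hq1 hq2
    · exact h.interval_unique p hp q hq e hp1 hp2 hq1 hq2
    · exact absurd (mem_right q hq e hq1 hq2) (disjoint_left.mp hPQ (mem_left p hp e hp1 hp2))
    · exact absurd (mem_left q hq e hq1 hq2) (disjoint_right.mp hPQ (mem_right p hp e hp1 hp2))
    · exact h'.interval_unique p hp q hq e hp1 hp2 hq1 hq2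

theorem biUnion {ι : Type*} {s : Finset ι} {S : ι → Finset (Finset ℕ × Finset ℕ)}
    {P : ι → Finset (Finset ℕ)} (h : ∀ i ∈ s, IsRankPartitioning (S i) (P i) r)
    (hP : (s : Set ι).PairwiseDisjoint P) :
    IsRankPartitioning (s.biUnion S) (s.biUnion P) r := by
  refine ⟨?_, ?_, ?_, ?_, ?_⟩
  · simp only [mem_biUnion]
    rintro p ⟨i, hi, hp⟩
    exact (h i hi).fst_subset_snd p hp
  · simp only [mem_biUnion]
    rintro p ⟨i, hi, hp⟩
    exact (h i hi).card_snd p hp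
  · simp only [mem_biUnion]
    rintro p ⟨i, hi, hp⟩ e h1 h2
    exact ⟨i, hi, (h i hi).mem_of_mem_interval p hp e h1 h2⟩
  · simp only [mem_biUnion]
    rintro e ⟨i, hi, he⟩
    obtain ⟨p, hp, hpe⟩ := (h i hi).exists_interval e he
    exact ⟨p, ⟨i, hi, hp⟩, hpe⟩
  · simp only [mem_biUnion]
    rintro p ⟨i, hi, hp⟩ q ⟨j, hj, hq⟩ e hp1 hp2 hq1 hq2
    obtain rfl : i = j := hP.elim_finset hi hj e ((h i hi).mem_of_mem_interval p hp e hp1 hp2)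
      ((h j hj).mem_of_mem_interval q hq e hq1 hq2)
    exact (h i hi).interval_unique p hp q hq e hp1 hp2 hq1 hq2

/-- Both intervals contain `e ∩ p.2`. -/
theorem eq_of_subset_union (h : IsRankPartitioning S P r) {c c' e : Finset ℕ}
    (hc : ∀ a ∈ P, Disjoint a c) (hc' : ∀ a ∈ P, Disjoint a c') {p p'} (hp : p ∈ S)
    (hp' : p' ∈ S) (h1 : p.1 ⊆ e) (h2 : e ⊆ p.2 ∪ c) (h1' : p'.1 ⊆ e) (h2' : e ⊆ p'.2 ∪ c') :
    p = p' := by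
  have hp'P := h.mem_of_mem_interval p' hp' _ Subset.rfl (h.fst_subset_snd p' hp')
  refine h.interval_unique p hp p' hp' (e ∩ p.2) (subset_inter h1 (h.fst_subset_snd p hp))
    inter_subset_right (subset_inter h1' ((hc _ hp'P).left_le_of_le_sup_right (h1'.trans h2))) ?_
  exact (hc' _ (h.inter_snd_mem hp h1)).left_le_of_le_sup_right (inter_subset_left.trans h2')

theorem sups (h : IsRankPartitioning S P r) (h' : IsRankPartitioning T Q r')
    (hPQ : ∀ a ∈ P, ∀ b ∈ Q, Disjoint a b) :
    IsRankPartitioning (S ⊻ T) (P ⊻ Q) (r + r') := by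
  refine ⟨?_, ?_, ?_, ?_, ?_⟩
  · simp only [mem_sups]
    rintro _ ⟨p, hp, q, hq, rfl⟩
    exact union_subset_union (h.fst_subset_snd p hp) (h'.fst_subset_snd q hq)
  · simp only [mem_sups]
    rintro _ ⟨p, hp, q, hq, rfl⟩
    rw [Prod.snd_sup, sup_eq_union, card_union_of_disjoint (hPQ _ (h.snd_mem hp) _ (h'.snd_mem hq)),
      h.card_snd p hp, h'.card_snd q hq]
  · simp only [mem_sups]
    rintro _ ⟨p, hp, q, hq, rfl⟩ e h1 h2
    simp only [Prod.fst_sup, Prod.snd_sup, sup_eq_union, union_subset_iff] at h1 h2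
    refine ⟨_, h.inter_snd_mem hp h1.1, _, h'.inter_snd_mem hq h1.2, ?_⟩
    rw [sup_eq_union, ← inter_union_distrib_left, inter_eq_left.mpr h2]
  · simp only [mem_sups]
    rintro _ ⟨a, ha, b, hb, rfl⟩
    obtain ⟨p, hp, hpa⟩ := h.exists_interval a ha
    obtain ⟨q, hq, hqb⟩ := h'.exists_interval b hb
    exact ⟨p ⊔ q, ⟨p, hp, q, hq, rfl⟩, union_subset_union hpa.1 hqb.1,
      union_subset_union hpa.2 hqb.2⟩
  · simp only [mem_sups]
    rintro _ ⟨p, hp, q, hq, rfl⟩ _ ⟨p', hp', q', hq', rfl⟩ e h1 h2 h1' h2'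
    simp only [Prod.fst_sup, Prod.snd_sup, sup_eq_union, union_subset_iff] at h1 h2 h1' h2'
    have hQP : ∀ b ∈ Q, ∀ a ∈ P, Disjoint b a := fun b hb a ha => (hPQ a ha b hb).symm
    rw [h.eq_of_subset_union (hPQ · · _ (h'.snd_mem hq)) (hPQ · · _ (h'.snd_mem hq')) hp hp'
        h1.1 h2 h1'.1 h2',
      h'.eq_of_subset_union (hQP · · _ (h.snd_mem hp)) (hQP · · _ (h.snd_mem hp')) hq hq'
        h1.2 (union_comm p.2 q.2 ▸ h2) h1'.2 (union_comm p'.2 q'.2 ▸ h2')]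

variable {v : ℕ}

theorem cone (h : IsRankPartitioning S P r) (hv : ∀ a ∈ P, v ∉ a) :
    IsRankPartitioning (S ⊻ {(∅, {v})}) (P ⊻ {∅, {v}}) (r + 1) :=
  h.sups (isRankPartitioning_pair v) fun a ha u hu => by
    simp only [mem_insert, mem_singleton] at hu
    rcases hu with rfl | rfl
    exacts [disjoint_empty_right a, disjoint_singleton_right.mpr (hv a ha)]

theorem sups_singleton_singleton (h : IsRankPartitioning S P r) (hv : ∀ a ∈ P, v ∉ a) :
    IsRankPartitioning (S ⊻ {({v}, {v})}) (P ⊻ {{v}}) (r + 1) :=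
  h.sups (isRankPartitioning_singleton {v}) fun a ha u hu => by
    rw [mem_singleton.mp hu]
    exact disjoint_singleton_right.mpr (hv a ha)

end IsRankPartitioning

theorem insert_empty_sups (A B : Finset (Finset ℕ)) : insert ∅ A ⊻ B = B ∪ A ⊻ B := by
  rw [insert_eq, sups_union_left, singleton_sups]
  simp

theorem sups_insert_empty (A B : Finset (Finset ℕ)) : A ⊻ insert ∅ B = A ∪ A ⊻ B := by
  rw [sups_comm, insert_empty_sups, sups_comm]

theorem IsComplex.sups {P Q : Finset (Finset ℕ)} (hP : IsComplex P) (hQ : IsComplex Q) :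
    IsComplex (P ⊻ Q) := by
  intro τ hτ ρ hρ
  obtain ⟨a, ha, b, hb, rfl⟩ := mem_sups.mp hτ
  refine mem_sups.mpr ⟨ρ ∩ a, hP a ha _ inter_subset_right, ρ ∩ b, hQ b hb _ inter_subset_right, ?_⟩
  rw [sup_eq_union, ← inter_union_distrib_left, inter_eq_left]
  exact hρ

theorem union_inter_eq {X a b : Finset ℕ} (ha : a ⊆ X) (hb : Disjoint b X) :
    (a ∪ b) ∩ X = a := by
  rw [union_inter_distrib_right, inter_eq_left.mpr ha, disjoint_iff_inter_eq_empty.mp hb,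
    union_empty]

theorem disjoint_sups {X : Finset ℕ} {A A' B B' : Finset (Finset ℕ)} (hA : ∀ a ∈ A ∪ A', a ⊆ X)
    (hB : ∀ b ∈ B ∪ B', Disjoint b X) (h : Disjoint A A') : Disjoint (A ⊻ B) (A' ⊻ B') := by
  simp only [disjoint_left, mem_sups]
  rintro _ ⟨a, ha, b, hb, rfl⟩ ⟨a', ha', b', hb', heq⟩
  have haX := union_inter_eq (hA a (mem_union_left _ ha)) (hB b (mem_union_left _ hb))
  have ha'X := union_inter_eq (hA a' (mem_union_right _ ha')) (hB b' (mem_union_right _ hb'))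
  simp only [sup_eq_union] at heq
  exact disjoint_left.mp h ha (by rwa [← haX, ← heq, ha'X])

theorem disjoint_sups_pair_sups_singleton {A A' : Finset (Finset ℕ)} {v : ℕ}
    (hA : ∀ a ∈ A, v ∉ a) (hA' : ∀ a ∈ A', v ∉ a) (h : Disjoint A A') :
    Disjoint (A ⊻ {∅, {v}}) (A' ⊻ {{v}}) := by
  simp only [disjoint_left, mem_sups, mem_insert, mem_singleton]
  rintro _ ⟨a, ha, u, hu, rfl⟩ ⟨a', ha', _, rfl, heq⟩
  simp only [sup_eq_union, union_singleton] at heq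
  rcases hu with rfl | rfl
  · rw [union_empty] at heq
    exact hA a ha (heq ▸ mem_insert_self v a')
  · rw [union_singleton] at heq
    refine disjoint_left.mp h ha ?_
    rwa [← erase_insert (hA a ha), ← heq, erase_insert (hA' a' ha')]

def crossVertex (M j : ℕ) (b : Bool) : ℕ := M + 2 * j + b.toNat

theorem crossVertex_notMem_Ico (M k : ℕ) (b : Bool) : crossVertex M k b ∉ Ico M (M + 2 * k) := by
  simp [crossVertex]

theorem crossVertex_mem_Ico (M k : ℕ) (b : Bool) :
    crossVertex M k b ∈ Ico M (M + 2 * (k + 1)) := by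
  simp only [crossVertex, mem_Ico]
  cases b <;> simp only [Bool.toNat_false, Bool.toNat_true] <;> omega

theorem crossVertex_ne_not (M k : ℕ) (b : Bool) : crossVertex M k b ≠ crossVertex M k (!b) := by
  cases b <;> simp [crossVertex]

/-- Boundary complex of the `k`-dimensional cross-polytope with antipodal pairs
`crossVertex M j false`, `crossVertex M j true` for `j < k`. -/
def crossPolytope (M : ℕ) : ℕ → Finset (Finset ℕ)
  | 0 => {∅}
  | k + 1 => crossPolytope M k ⊻ {∅, {crossVertex M k false}, {crossVertex M k true}}

/-- `U^b_k`: the nonempty faces of `crossPolytope M k` lying in intervals whose top contains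
`crossVertex M (k - 1) b`. -/
def crossHalf (M : ℕ) : ℕ → Bool → Finset (Finset ℕ)
  | 0, _ => ∅
  | k + 1, b => crossHalf M k (!b) ⊻ {∅, {crossVertex M k b}} ∪
      insert ∅ (crossHalf M k b) ⊻ {{crossVertex M k b}}

theorem crossPolytope_eq (M k : ℕ) :
    crossPolytope M k = insert ∅ (crossHalf M k false ∪ crossHalf M k true) := by
  induction k with
  | zero => rfl
  | succ k ih =>
    rw [crossPolytope, ih, insert_eq ({crossVertex M k false} : Finset ℕ)]
    simp only [crossHalf, Bool.not_false, Bool.not_true, insert_empty_sups, sups_insert_empty,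
      sups_union_left, sups_union_right]
    ext e
    simp only [mem_insert, mem_union]
    tauto

theorem insert_empty_crossHalf_succ (M k : ℕ) (b : Bool) :
    insert ∅ (crossHalf M (k + 1) b) =
      insert ∅ (crossHalf M k (!b)) ⊻ {∅, {crossVertex M k b}} ∪
        crossHalf M k b ⊻ {{crossVertex M k b}} := by
  simp only [crossHalf, insert_empty_sups, sups_insert_empty]
  ext e
  simp only [mem_insert, mem_union]
  tauto

theorem subset_Ico_of_mem_crossPolytope {M k : ℕ} {ω : Finset ℕ} (hω : ω ∈ crossPolytope M k) :
    ω ⊆ Ico M (M + 2 * k) := by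
  induction k generalizing ω with
  | zero => simp_all [crossPolytope]
  | succ k ih =>
    obtain ⟨a, ha, u, hu, rfl⟩ := mem_sups.mp hω
    have hk : Ico M (M + 2 * k) ⊆ Ico M (M + 2 * (k + 1)) := Ico_subset_Ico_right (by omega)
    refine union_subset ((ih ha).trans hk) ?_
    simp only [mem_insert, mem_singleton] at hu
    rcases hu with rfl | rfl | rfl
    · exact empty_subset _
    all_goals exact singleton_subset_iff.mpr (crossVertex_mem_Ico M k _)

theorem disjoint_range_of_mem_crossPolytope {M k : ℕ} {ω : Finset ℕ}
    (hω : ω ∈ crossPolytope M k) : Disjoint ω (range M) :=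
  disjoint_left.mpr fun v hv hvM => (Nat.lt_irrefl v)
    ((mem_range.mp hvM).trans_le (mem_Ico.mp (subset_Ico_of_mem_crossPolytope hω hv)).1)

theorem isComplex_crossPolytope (M k : ℕ) : IsComplex (crossPolytope M k) := by
  induction k with
  | zero => simp [IsComplex, crossPolytope]
  | succ k ih =>
    refine ih.sups fun σ hσ τ hτ => ?_
    simp only [mem_insert, mem_singleton] at hσ ⊢
    rcases hσ with rfl | rfl | rfl <;> simp_all [subset_singleton_iff] <;> tauto

theorem crossPolytope_mono (M : ℕ) : Monotone (crossPolytope M) := by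
  refine monotone_nat_of_le_succ fun k => ?_
  rw [crossPolytope, sups_insert_empty]
  exact subset_union_left

theorem empty_mem_crossPolytope (M k : ℕ) : ∅ ∈ crossPolytope M k := by
  rw [crossPolytope_eq]
  exact mem_insert_self _ _

theorem insert_empty_crossHalf_subset (M k : ℕ) (b : Bool) :
    insert ∅ (crossHalf M k b) ⊆ crossPolytope M k := by
  rw [crossPolytope_eq]
  cases b <;> simp [insert_subset_insert, subset_union_left, subset_union_right]

theorem crossVertex_notMem_of_mem_crossHalf {M k : ℕ} {b : Bool} {ω : Finset ℕ}
    (hω : ω ∈ insert ∅ (crossHalf M k b)) (c : Bool) : crossVertex M k c ∉ ω := fun h =>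
  crossVertex_notMem_Ico M k c
    (subset_Ico_of_mem_crossPolytope (insert_empty_crossHalf_subset M k b hω) h)

theorem empty_notMem_crossHalf (M k : ℕ) (b : Bool) : ∅ ∉ crossHalf M k b := by
  induction k generalizing b with
  | zero => simp [crossHalf]
  | succ k ih => simp [crossHalf, mem_sups, ih]

theorem mem_crossHalf_succ {M k : ℕ} {b : Bool} {ω : Finset ℕ}
    (hω : ω ∈ crossHalf M (k + 1) b) :
    crossVertex M k (!b) ∉ ω ∧ (crossVertex M k b ∈ ω ∨ ω ∈ crossHalf M k (!b)) := by
  have hne := crossVertex_ne_not M k b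
  simp only [crossHalf, mem_union, mem_sups, mem_insert, mem_singleton] at hω
  rcases hω with ⟨a, ha, u, rfl | rfl, rfl⟩ | ⟨a, ha, _, rfl, rfl⟩
  · have := crossVertex_notMem_of_mem_crossHalf (mem_insert_of_mem ha) (!b)
    simp_all
  · have := crossVertex_notMem_of_mem_crossHalf (mem_insert_of_mem ha) (!b)
    simp_all [eq_comm]
  · have := crossVertex_notMem_of_mem_crossHalf (mem_insert.mpr ha) (!b)
    simp_all [eq_comm]

theorem disjoint_crossHalf (M k : ℕ) (b : Bool) :
    Disjoint (crossHalf M k b) (crossHalf M k (!b)) := by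
  induction k generalizing b with
  | zero => simp [crossHalf]
  | succ k ih =>
    refine disjoint_left.mpr fun ω hb hnb => ?_
    obtain ⟨hnotb, hb | hb⟩ := mem_crossHalf_succ hb
    · exact (mem_crossHalf_succ hnb).1 (by rwa [Bool.not_not])
    obtain ⟨-, hnb | hnb⟩ := mem_crossHalf_succ hnb
    · exact hnotb hnb
    · exact disjoint_left.mp (ih b) (by rwa [Bool.not_not] at hnb) hb

theorem rankPartitionable_crossHalf (M k : ℕ) (b : Bool) :
    RankPartitionable (crossHalf M k b) k ∧ RankPartitionable (insert ∅ (crossHalf M k b)) k := by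
  induction k generalizing b with
  | zero => exact ⟨⟨∅, isRankPartitioning_empty 0⟩, ⟨{(∅, ∅)}, isRankPartitioning_singleton ∅⟩⟩
  | succ k ih =>
    obtain ⟨⟨S, hS⟩, S', hS'⟩ := ih (!b)
    obtain ⟨⟨T, hT⟩, T', hT'⟩ := ih b
    have hv : ∀ c, ∀ a ∈ insert ∅ (crossHalf M k c), crossVertex M k b ∉ a := fun _ _ ha =>
      crossVertex_notMem_of_mem_crossHalf ha b
    have hv' : ∀ c, ∀ a ∈ crossHalf M k c, crossVertex M k b ∉ a := fun c a ha =>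
      hv c a (mem_insert_of_mem ha)
    have hdisj : Disjoint (crossHalf M k (!b)) (crossHalf M k b) := by
      simpa using (disjoint_crossHalf M k b).symm
    refine ⟨⟨_, (hS.cone (hv' _)).union (hT'.sups_singleton_singleton (hv _))
      (disjoint_sups_pair_sups_singleton (hv' _) (hv _)
        (disjoint_insert_right.mpr ⟨empty_notMem_crossHalf M k _, hdisj⟩))⟩, ?_⟩
    rw [insert_empty_crossHalf_succ]
    exact ⟨_, (hS'.cone (hv _)).union (hT.sups_singleton_singleton (hv' _))
      (disjoint_sups_pair_sups_singleton (hv _) (hv' _)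
        (disjoint_insert_left.mpr ⟨empty_notMem_crossHalf M k _, hdisj⟩))⟩

theorem rankPartitionable_crossPolytope (M k : ℕ) : RankPartitionable (crossPolytope M k) k := by
  obtain ⟨-, S, hS⟩ := rankPartitionable_crossHalf M k false
  obtain ⟨⟨T, hT⟩, -⟩ := rankPartitionable_crossHalf M k true
  rw [crossPolytope_eq, ← insert_union]
  exact ⟨S ∪ T, hS.union hT
    (disjoint_insert_left.mpr ⟨empty_notMem_crossHalf M k _, disjoint_crossHalf M k false⟩)⟩

theorem rankPartitionable_crossPolytope_erase (M k : ℕ) :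
    RankPartitionable ((crossPolytope M k).erase ∅) k := by
  obtain ⟨⟨S, hS⟩, -⟩ := rankPartitionable_crossHalf M k false
  obtain ⟨⟨T, hT⟩, -⟩ := rankPartitionable_crossHalf M k true
  rw [crossPolytope_eq, erase_insert (by simp [empty_notMem_crossHalf])]
  exact ⟨S ∪ T, hS.union hT (disjoint_crossHalf M k false)⟩
theorem exists_isFacet_superset {Δ : Finset (Finset ℕ)} {σ : Finset ℕ} (hσ : σ ∈ Δ) :
    ∃ F, IsFacet Δ F ∧ σ ⊆ F := by
  obtain ⟨F, hσF, hF, hmax⟩ := Δ.exists_le_maximal hσ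
  exact ⟨F, ⟨hF, fun G hG hFG => le_antisymm hFG (hmax hG hFG)⟩, hσF⟩

theorem PureDim.exists_card_le {Δ : Finset (Finset ℕ)} {d : ℤ} (h : PureDim Δ d) :
    ∃ m : ℕ, (m : ℤ) = d + 1 ∧ ∀ σ ∈ Δ, σ.card ≤ m := by
  obtain ⟨⟨σ₀, hσ₀⟩, hfacet⟩ := h
  obtain ⟨F₀, hF₀, -⟩ := exists_isFacet_superset hσ₀
  refine ⟨F₀.card, hfacet F₀ hF₀, fun σ hσ => ?_⟩
  obtain ⟨F, hF, hσF⟩ := exists_isFacet_superset hσ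
  have hFF₀ : F.card = F₀.card := by exact_mod_cast (hfacet F hF).trans (hfacet F₀ hF₀).symm
  exact (card_le_card hσF).trans hFF₀.le

/-- `Γ`, where `M` exceeds every vertex of `Δ` and `m = d + 1`. -/
def extender (Δ : Finset (Finset ℕ)) (M m : ℕ) : Finset (Finset ℕ) :=
  Δ.biUnion fun σ => {σ} ⊻ crossPolytope M (m - σ.card)

section extender

variable {Δ : Finset (Finset ℕ)} {M m : ℕ}

theorem isComplex_extender (hΔ : IsComplex Δ) : IsComplex (extender Δ M m) := by
  intro τ hτ ρ hρ
  simp only [extender, mem_biUnion, singleton_sups, mem_image] at hτ ⊢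
  obtain ⟨σ, hσ, ω, hω, rfl⟩ := hτ
  refine ⟨ρ ∩ σ, hΔ σ hσ _ inter_subset_right, ρ ∩ ω,
    crossPolytope_mono M (Nat.sub_le_sub_left (card_le_card inter_subset_right) m)
      (isComplex_crossPolytope M _ ω hω _ inter_subset_right), ?_⟩
  rw [sup_eq_union, ← inter_union_distrib_left, inter_eq_left]
  exact hρ

theorem subset_extender : Δ ⊆ extender Δ M m := fun σ hσ =>
  mem_biUnion.mpr ⟨σ, hσ, mem_sups.mpr ⟨σ, mem_singleton_self σ, ∅, empty_mem_crossPolytope M _,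
    sup_bot_eq σ⟩⟩

theorem extender_sdiff (hM : ∀ σ ∈ Δ, σ ⊆ range M) :
    extender Δ M m \ Δ = Δ.biUnion fun σ => {σ} ⊻ (crossPolytope M (m - σ.card)).erase ∅ := by
  ext τ
  simp only [extender, mem_sdiff, mem_biUnion, singleton_sups, mem_image, mem_erase, sup_eq_union]
  constructor
  · rintro ⟨⟨σ, hσ, ω, hω, rfl⟩, hnot⟩
    exact ⟨σ, hσ, ω, ⟨fun h => hnot (by rwa [h, union_empty]), hω⟩, rfl⟩
  · rintro ⟨σ, hσ, ω, ⟨hne, hω⟩, rfl⟩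
    refine ⟨⟨σ, hσ, ω, hω, rfl⟩, fun hmem => hne ?_⟩
    exact disjoint_self.mp
      ((disjoint_range_of_mem_crossPolytope hω).mono_right (subset_union_right.trans (hM _ hmem)))

theorem rankPartitionable_biUnion_singleton_sups {F : ℕ → Finset (Finset ℕ)}
    (hM : ∀ σ ∈ Δ, σ ⊆ range M) (hcard : ∀ σ ∈ Δ, σ.card ≤ m)
    (hF : ∀ k, ∀ ω ∈ F k, Disjoint ω (range M)) (hFpart : ∀ k, RankPartitionable (F k) k) :
    RankPartitionable (Δ.biUnion fun σ => {σ} ⊻ F (m - σ.card)) m := by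
  choose S hS using hFpart
  refine ⟨Δ.biUnion fun σ => {(σ, σ)} ⊻ S (m - σ.card),
    IsRankPartitioning.biUnion (fun σ hσ => ?_) ?_⟩
  · have := (isRankPartitioning_singleton σ).sups (hS (m - σ.card)) fun a ha ω hω => by
      rw [mem_singleton.mp ha]
      exact (hF _ ω hω).symm.mono_left (hM σ hσ)
    rwa [Nat.add_sub_cancel' (hcard σ hσ)] at this
  · intro σ hσ σ' hσ' hne
    refine disjoint_sups (X := range M) (fun a ha => ?_) (fun ω hω => ?_)
      (disjoint_singleton.mpr hne)
    · simp only [mem_union, mem_singleton] at ha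
      rcases ha with rfl | rfl
      exacts [hM a hσ, hM a hσ']
    · rcases mem_union.mp hω with hω | hω
      exacts [hF _ ω hω, hF _ ω hω]

end extender

/-- Every pure simplicial complex `Δ` has a partition extender: a pure complex `Γ` of the
same dimension with `Δ ⊆ Γ` such that both `Γ` and the relative complex `(Γ, Δ)` are
partitionable. -/
theorem every_pure_complex_has_partition_extender
    (d : ℤ) (Δ : Finset (Finset ℕ)) (hΔ : IsComplex Δ) (hpure : PureDim Δ d) :
    ∃ Γ : Finset (Finset ℕ), IsComplex Γ ∧ PureDim Γ d ∧ Δ ⊆ Γ ∧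
      Partitionable Γ ∧ Partitionable (Γ \ Δ) := by
  obtain ⟨m, hm, hcard⟩ := hpure.exists_card_le
  obtain ⟨M, hM⟩ : ∃ M, ∀ σ ∈ Δ, σ ⊆ range M :=
    (exists_nat_subset_range (Δ.sup id)).imp fun M hM σ hσ => (le_sup (f := id) hσ).trans hM
  obtain ⟨S, hS⟩ := rankPartitionable_biUnion_singleton_sups hM hcard
    (fun _ _ => disjoint_range_of_mem_crossPolytope) (rankPartitionable_crossPolytope M)
  obtain ⟨T, hT⟩ := rankPartitionable_biUnion_singleton_sups hM hcard
    (fun _ _ hω => disjoint_range_of_mem_crossPolytope (mem_of_mem_erase hω))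
    (rankPartitionable_crossPolytope_erase M)
  rw [← extender_sdiff hM] at hT
  refine ⟨extender Δ M m, isComplex_extender hΔ, ⟨hpure.1.mono subset_extender, fun F hF => ?_⟩,
    subset_extender, ⟨S, hS.isPartitioning⟩, ⟨T, hT.isPartitioning⟩⟩
  rw [hS.card_of_isFacet hF, hm]
end

section
/- Let −1 ≤ k ≤ d. Let Δ be the simplicial complex on vertex set [2d−k+1] whose facets are: D₁ = [d−k] ∪ σ, D₂ = {d−k+1,…,2d−2k} ∪ σ where σ = {2d−2k+1,…,2d−k+1}, and all sets of the form W_{1,j} ∪ W_{2,i} where W_{1,j} = {j+1,…,j+d−k+1} for 0 ≤ j ≤ d−k−1 and W_{2,i} = σ∖{i} for i ∈ σ. Then the Boolean intervals I = [σ, D₁], I′ = [∅, D₂], and I_{i,j} = [{j+1} ∪ {v ∈ σ : v < i}, W_{1,j} ∪ W_{2,i}] (for i ∈ σ and 0 ≤ j ≤ d−k−1) cover every face of Δ, each face lying in exactly one of these intervals except the face σ, which lies in both I and I′. Consequently, the intervals I and I_{i,j} form a partitioning of the poset (Δ,⟨D₂⟩) ∪ {σ}, so Δ is a (d,k)-prepartition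 extender with specified facet D₂ and specified face σ. -/
/-- The specified `k`-face `σ = {2d-2k+1, …, 2d-k+1}` of the canonical
`(d,k)`-prepartition extender. -/
def sigC (d k : ℤ) : Finset ℕ :=
  Finset.Icc ((2 * (d - k)).toNat + 1) ((2 * (d - k)).toNat + (k + 1).toNat)

/-- The facet `D₁ = [d-k] ∪ σ`. -/
def D1 (d k : ℤ) : Finset ℕ :=
  Finset.Icc 1 (d - k).toNat ∪ sigC d k

/-- The facet `D₂ = {d-k+1, …, 2d-2k} ∪ σ`. -/
def D2 (d k : ℤ) : Finset ℕ :=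
  Finset.Icc ((d - k).toNat + 1) (2 * (d - k)).toNat ∪ sigC d k

/-- `W_{1,j} = {j+1, …, j+d-k+1}`. -/
def W1 (d k : ℤ) (j : ℕ) : Finset ℕ :=
  Finset.Icc (j + 1) (j + (d - k).toNat + 1)

/-- `W_{2,i} = σ ∖ {i}`. -/
def W2 (d k : ℤ) (i : ℕ) : Finset ℕ :=
  (sigC d k).erase i

/-- The bottom element `{j+1} ∪ {v ∈ σ : v < i}` of the interval `I_{i,j}`. -/
def botIJ (d k : ℤ) (i j : ℕ) : Finset ℕ :=
  insert (j + 1) ((sigC d k).filter (· < i))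

/-- The canonical `(d,k)`-prepartition extender: the simplicial complex on the vertex
set `[2d-k+1]` whose facets are `D₁`, `D₂` and the sets `W_{1,j} ∪ W_{2,i}`. -/
def preExt (d k : ℤ) : Finset (Finset ℕ) :=
  (Finset.Icc 1 ((2 * (d - k)).toNat + (k + 1).toNat)).powerset.filter
    (fun τ => τ ⊆ D1 d k ∨ τ ⊆ D2 d k ∨
      ∃ j ∈ Finset.range (d - k).toNat, ∃ i ∈ sigC d k, τ ⊆ W1 d k j ∪ W2 d k i)

/-- The family of Boolean intervals `I_{i,j} = [{j+1} ∪ {v ∈ σ : v < i}, W_{1,j} ∪ W_{2,i}]`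
for `i ∈ σ` and `0 ≤ j ≤ d-k-1`, encoded as (bottom, top) pairs. -/
def preIJ (d k : ℤ) : Finset (Finset ℕ × Finset ℕ) :=
  ((Finset.range (d - k).toNat) ×ˢ sigC d k).image
    (fun p => (botIJ d k p.2 p.1, W1 d k p.1 ∪ W2 d k p.2))

/-- The intervals `I = [σ, D₁]` and `I_{i,j}`: they partition `(Δ,⟨D₂⟩) ∪ {σ}`. -/
def preIntervals (d k : ℤ) : Finset (Finset ℕ × Finset ℕ) :=
  insert (sigC d k, D1 d k) (preIJ d k)

/-- All the intervals `I = [σ, D₁]`, `I' = [∅, D₂]` and `I_{i,j}`. -/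
def allIntervals (d k : ℤ) : Finset (Finset ℕ × Finset ℕ) :=
  insert (∅, D2 d k) (preIntervals d k)

/-!
The interval of a face `τ` is read off from `τ` itself: `I' = [∅, D₂]` if `τ ⊆ D₂`; otherwise
`I = [σ, D₁]` if `σ ⊆ τ`; otherwise `I_{i,j}` with `j + 1 = min τ` and `i = min (σ ∖ τ)`. Conversely
any `I_{i,j}` containing `τ` has these `i` and `j`, no face of `I_{i,j}` lies in `D₂` or contains
`σ`, and `D₁ ∩ D₂ = σ`; so the only face in two intervals is `σ`, lying in `I` and `I'`.
-/

open Finset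

section PreExt

variable {d k : ℤ} {x i j : ℕ} {τ : Finset ℕ}

lemma toNat_two_mul (z : ℤ) : (2 * z).toNat = 2 * z.toNat := by
  omega

lemma mem_sigC :
    x ∈ sigC d k ↔ 2 * (d - k).toNat < x ∧ x ≤ 2 * (d - k).toNat + (k + 1).toNat := by
  rw [sigC, mem_Icc, toNat_two_mul, Nat.succ_le_iff]

lemma mem_D1 : x ∈ D1 d k ↔ (1 ≤ x ∧ x ≤ (d - k).toNat) ∨
    (2 * (d - k).toNat < x ∧ x ≤ 2 * (d - k).toNat + (k + 1).toNat) := by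
  rw [D1, mem_union, mem_Icc, mem_sigC]

lemma mem_D2 : x ∈ D2 d k ↔ ((d - k).toNat < x ∧ x ≤ 2 * (d - k).toNat) ∨
    (2 * (d - k).toNat < x ∧ x ≤ 2 * (d - k).toNat + (k + 1).toNat) := by
  rw [D2, mem_union, mem_Icc, toNat_two_mul, Nat.succ_le_iff, mem_sigC]

lemma mem_W1_union_W2 :
    x ∈ W1 d k j ∪ W2 d k i ↔ (j < x ∧ x ≤ j + (d - k).toNat + 1) ∨
      (x ≠ i ∧ 2 * (d - k).toNat < x ∧ x ≤ 2 * (d - k).toNat + (k + 1).toNat) := by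
  rw [W1, W2, mem_union, mem_Icc, mem_erase, Nat.succ_le_iff, mem_sigC]

lemma mem_botIJ : x ∈ botIJ d k i j ↔
    x = j + 1 ∨ ((2 * (d - k).toNat < x ∧ x ≤ 2 * (d - k).toNat + (k + 1).toNat) ∧ x < i) := by
  rw [botIJ, mem_insert, mem_filter, mem_sigC]

lemma sigC_subset_D1 : sigC d k ⊆ D1 d k := subset_union_right

lemma sigC_subset_D2 : sigC d k ⊆ D2 d k := subset_union_right

lemma eq_sigC_of_subset_D1_of_subset_D2 (hσ : sigC d k ⊆ τ) (h1 : τ ⊆ D1 d k)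
    (h2 : τ ⊆ D2 d k) : τ = sigC d k := by
  refine Subset.antisymm (fun x hx => ?_) hσ
  have := mem_D1.mp (h1 hx)
  have := mem_D2.mp (h2 hx)
  rw [mem_sigC]
  omega

lemma succ_notMem_D2 (hj : j < (d - k).toNat) : j + 1 ∉ D2 d k := by
  rw [mem_D2]; omega

lemma self_notMem_W1_union_W2 (hj : j < (d - k).toNat) (hi : i ∈ sigC d k) :
    i ∉ W1 d k j ∪ W2 d k i := by
  rw [mem_W1_union_W2]
  have := mem_sigC.mp hi
  omega

lemma botIJ_subset_W1_union_W2 : botIJ d k i j ⊆ W1 d k j ∪ W2 d k i := by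
  intro x hx
  rw [mem_botIJ] at hx
  rw [mem_W1_union_W2]
  omega

def IsPreExtGenerator (d k : ℤ) (G : Finset ℕ) : Prop :=
  G = D1 d k ∨ G = D2 d k ∨
    ∃ j < (d - k).toNat, ∃ i ∈ sigC d k, G = W1 d k j ∪ W2 d k i

lemma isPreExtGenerator_D1 : IsPreExtGenerator d k (D1 d k) := Or.inl rfl

lemma isPreExtGenerator_D2 : IsPreExtGenerator d k (D2 d k) := Or.inr (Or.inl rfl)

lemma IsPreExtGenerator.subset_Icc {G : Finset ℕ} (hG : IsPreExtGenerator d k G) :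
    G ⊆ Icc 1 ((2 * (d - k)).toNat + (k + 1).toNat) := by
  intro x hx
  rw [mem_Icc, toNat_two_mul]
  rcases hG with rfl | rfl | ⟨j, hj, i, hi, rfl⟩
  · have := mem_D1.mp hx; omega
  · have := mem_D2.mp hx; omega
  · have := mem_W1_union_W2.mp hx; omega

lemma mem_preExt : τ ∈ preExt d k ↔ ∃ G, IsPreExtGenerator d k G ∧ τ ⊆ G := by
  rw [preExt, mem_filter, mem_powerset]
  constructor
  · rintro ⟨-, h | h | ⟨j, hj, i, hi, h⟩⟩
    · exact ⟨_, isPreExtGenerator_D1, h⟩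
    · exact ⟨_, isPreExtGenerator_D2, h⟩
    · exact ⟨_, Or.inr (Or.inr ⟨j, mem_range.mp hj, i, hi, rfl⟩), h⟩
  · rintro ⟨G, hG, hτ⟩
    refine ⟨hτ.trans hG.subset_Icc, ?_⟩
    rcases hG with rfl | rfl | ⟨j, hj, i, hi, rfl⟩
    · exact Or.inl hτ
    · exact Or.inr (Or.inl hτ)
    · exact Or.inr (Or.inr ⟨j, mem_range.mpr hj, i, hi, hτ⟩)

lemma isComplex_preExt : IsComplex (preExt d k) := by
  intro σ hσ τ hτ
  obtain ⟨G, hG, hσG⟩ := mem_preExt.mp hσ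
  exact mem_preExt.mpr ⟨G, hG, hτ.trans hσG⟩

lemma IsPreExtGenerator.mem_preExt {G : Finset ℕ} (hG : IsPreExtGenerator d k G) :
    G ∈ preExt d k :=
  _root_.mem_preExt.mpr ⟨G, hG, Subset.rfl⟩

lemma card_sigC : (sigC d k).card = (k + 1).toNat := by
  rw [sigC, Nat.card_Icc]; omega

lemma IsPreExtGenerator.card {G : Finset ℕ} (hG : IsPreExtGenerator d k G) :
    G.card = (d - k).toNat + (k + 1).toNat := by
  have disjoint_sigC {A : Finset ℕ} (hA : ∀ x ∈ A, x ≤ 2 * (d - k).toNat) :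
      Disjoint A (sigC d k) :=
    disjoint_left.mpr fun x hxA hxσ => by have := hA x hxA; have := mem_sigC.mp hxσ; omega
  rcases hG with rfl | rfl | ⟨j, hj, i, hi, rfl⟩
  · rw [D1, card_union_of_disjoint (disjoint_sigC fun x hx => by rw [mem_Icc] at hx; omega),
      Nat.card_Icc, card_sigC]
    omega
  · rw [D2, card_union_of_disjoint (disjoint_sigC fun x hx => by rw [mem_Icc] at hx; omega),
      Nat.card_Icc, card_sigC]
    omega
  · have hW2 : W2 d k i ⊆ sigC d k := erase_subset i _
    have hW1 : Disjoint (W1 d k j) (sigC d k) :=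
      disjoint_sigC fun x hx => by rw [W1, mem_Icc] at hx; omega
    rw [card_union_of_disjoint (hW1.mono_right hW2),
      W1, Nat.card_Icc, W2, card_erase_of_mem hi, card_sigC]
    have := card_sigC (d := d) (k := k) ▸ card_pos.mpr ⟨i, hi⟩
    omega

lemma IsPreExtGenerator.eq_of_subset {G H : Finset ℕ} (hG : IsPreExtGenerator d k G)
    (hH : H ∈ preExt d k) (hGH : G ⊆ H) : G = H := by
  obtain ⟨G', hG', hHG'⟩ := _root_.mem_preExt.mp hH
  refine eq_of_subset_of_card_le hGH ?_
  rw [hG.card, ← hG'.card]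
  exact card_le_card hHG'

lemma IsPreExtGenerator.isFacet {G : Finset ℕ} (hG : IsPreExtGenerator d k G) :
    IsFacet (preExt d k) G :=
  ⟨hG.mem_preExt, fun _ => hG.eq_of_subset⟩

lemma pureDim_preExt (hk : -1 ≤ k) (hkd : k ≤ d) : PureDim (preExt d k) d := by
  refine ⟨⟨_, isPreExtGenerator_D1.mem_preExt⟩, fun F hF => ?_⟩
  obtain ⟨G, hG, hFG⟩ := mem_preExt.mp hF.1
  rw [hF.2 G hG.mem_preExt hFG, hG.card]
  omega

lemma subset_Icc_of_mem_preExt (hτ : τ ∈ preExt d k) :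
    τ ⊆ Icc 1 (2 * (d - k).toNat + (k + 1).toNat) := by
  rw [← toNat_two_mul]
  exact mem_powerset.mp (mem_filter.mp hτ).1

lemma sigC_not_subset_W1_union_W2 (hj : j < (d - k).toNat) (hi : i ∈ sigC d k) :
    ¬ sigC d k ⊆ W1 d k j ∪ W2 d k i :=
  fun h => self_notMem_W1_union_W2 hj hi (h hi)

lemma not_subset_D2_of_botIJ_subset (hj : j < (d - k).toNat) (h : botIJ d k i j ⊆ τ) :
    ¬ τ ⊆ D2 d k :=
  fun h2 => succ_notMem_D2 hj (h2 (h (mem_botIJ.mpr (Or.inl rfl))))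

lemma subset_D1_of_sigC_subset (hτ : τ ∈ preExt d k) (hD2 : ¬ τ ⊆ D2 d k)
    (hσ : sigC d k ⊆ τ) : τ ⊆ D1 d k := by
  obtain ⟨G, hG | hG | ⟨j, hj, i, hi, hG⟩, hτG⟩ := mem_preExt.mp hτ <;> subst hG
  · exact hτG
  · exact absurd hτG hD2
  · exact absurd (hσ.trans hτG) (sigC_not_subset_W1_union_W2 hj hi)

/-- Outside `σ`, a face not contained in `D₂` lies in `D₁` or in some window `W_{1,j}`,
so its vertices there are at most `d - k` apart. -/
lemma le_add_of_mem_preExt {a : ℕ} (hτ : τ ∈ preExt d k) (hD2 : ¬ τ ⊆ D2 d k)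
    (ha : a ∈ τ) (hx : x ∈ τ) (haσ : a ≤ 2 * (d - k).toNat) (hxσ : x ≤ 2 * (d - k).toNat) :
    x ≤ a + (d - k).toNat := by
  obtain ⟨G, hG | hG | ⟨j, hj, i, hi, hG⟩, hτG⟩ := mem_preExt.mp hτ <;> subst hG
  · have := mem_D1.mp (hτG hx); omega
  · exact absurd hτG hD2
  · have := mem_W1_union_W2.mp (hτG hx); have := mem_W1_union_W2.mp (hτG ha); omega

lemma exists_botIJ_subset_of_not_subset (hτ : τ ∈ preExt d k) (hD2 : ¬ τ ⊆ D2 d k)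
    (hσ : ¬ sigC d k ⊆ τ) :
    ∃ j < (d - k).toNat, ∃ i ∈ sigC d k, botIJ d k i j ⊆ τ ∧ τ ⊆ W1 d k j ∪ W2 d k i := by
  have hIcc := subset_Icc_of_mem_preExt hτ
  obtain ⟨w, hwτ, hwD2⟩ := not_subset.mp hD2
  have hne : τ.Nonempty := ⟨w, hwτ⟩
  have haτ := τ.min'_mem hne
  have haw := τ.min'_le w hwτ
  have hw := mem_Icc.mp (hIcc hwτ)
  have ha := mem_Icc.mp (hIcc haτ)
  rw [mem_D2] at hwD2
  have hσne : (sigC d k \ τ).Nonempty := sdiff_nonempty.mpr hσ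
  obtain ⟨hiσ, hiτ⟩ := mem_sdiff.mp ((sigC d k \ τ).min'_mem hσne)
  refine ⟨τ.min' hne - 1, by omega, _, hiσ, fun x hx => ?_, fun x hx => ?_⟩
  · rcases mem_botIJ.mp hx with rfl | ⟨hxσ, hxi⟩
    · rwa [Nat.sub_add_cancel (by omega)]
    · by_contra hxτ
      have := (sigC d k \ τ).min'_le x (mem_sdiff.mpr ⟨mem_sigC.mpr hxσ, hxτ⟩)
      omega
  · have hax := τ.min'_le x hx
    have := mem_Icc.mp (hIcc hx)
    rw [mem_W1_union_W2]
    by_cases hxσ : x ≤ 2 * (d - k).toNat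
    · have := le_add_of_mem_preExt hτ hD2 haτ hx (by omega) hxσ
      omega
    · exact Or.inr ⟨fun h => hiτ (h ▸ hx), by omega, by omega⟩

lemma mem_preIJ {p : Finset ℕ × Finset ℕ} : p ∈ preIJ d k ↔
    ∃ j < (d - k).toNat, ∃ i ∈ sigC d k, p = (botIJ d k i j, W1 d k j ∪ W2 d k i) := by
  simp only [preIJ, mem_image, mem_product, mem_range, Prod.exists]
  constructor
  · rintro ⟨j, i, ⟨hj, hi⟩, rfl⟩
    exact ⟨j, hj, i, hi, rfl⟩
  · rintro ⟨j, hj, i, hi, rfl⟩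
    exact ⟨j, i, ⟨hj, hi⟩, rfl⟩

lemma mem_preIntervals {p : Finset ℕ × Finset ℕ} : p ∈ preIntervals d k ↔
    p = (sigC d k, D1 d k) ∨
      ∃ j < (d - k).toNat, ∃ i ∈ sigC d k, p = (botIJ d k i j, W1 d k j ∪ W2 d k i) := by
  rw [preIntervals, mem_insert, mem_preIJ]

lemma mem_allIntervals {p : Finset ℕ × Finset ℕ} :
    p ∈ allIntervals d k ↔ p = (∅, D2 d k) ∨ p ∈ preIntervals d k :=
  mem_insert

lemma fst_subset_snd_of_mem_preIntervals {p : Finset ℕ × Finset ℕ} (hp : p ∈ preIntervals d k) :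
    p.1 ⊆ p.2 := by
  rcases mem_preIntervals.mp hp with rfl | ⟨j, hj, i, hi, rfl⟩
  · exact sigC_subset_D1
  · exact botIJ_subset_W1_union_W2

lemma isPreExtGenerator_snd_of_mem_preIntervals {p : Finset ℕ × Finset ℕ}
    (hp : p ∈ preIntervals d k) : IsPreExtGenerator d k p.2 := by
  rcases mem_preIntervals.mp hp with rfl | ⟨j, hj, i, hi, rfl⟩
  · exact isPreExtGenerator_D1
  · exact Or.inr (Or.inr ⟨j, hj, i, hi, rfl⟩)

lemma eq_sigC_of_mem_preIntervals_of_subset_D2 {p : Finset ℕ × Finset ℕ}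
    (hp : p ∈ preIntervals d k) (h1 : p.1 ⊆ τ) (h2 : τ ⊆ p.2) (hD2 : τ ⊆ D2 d k) :
    τ = sigC d k := by
  rcases mem_preIntervals.mp hp with rfl | ⟨j, hj, i, hi, rfl⟩
  · exact eq_sigC_of_subset_D1_of_subset_D2 h1 h2 hD2
  · exact absurd hD2 (not_subset_D2_of_botIJ_subset hj h1)

/-- `j + 1` is the least vertex of any face of `I_{i,j}`, and `i` the least vertex of `σ`
that such a face misses. -/
lemma le_of_mem_IJ_of_mem_IJ {i' j' : ℕ} (hj : j < (d - k).toNat) (hi : i ∈ sigC d k)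
    (hbot : botIJ d k i j ⊆ τ) (htop : τ ⊆ W1 d k j ∪ W2 d k i)
    (hbot' : botIJ d k i' j' ⊆ τ) (htop' : τ ⊆ W1 d k j' ∪ W2 d k i') : j' ≤ j ∧ i' ≤ i := by
  have hjτ : j + 1 ∈ τ := hbot (mem_botIJ.mpr (Or.inl rfl))
  have hiτ : i ∉ τ := fun h => self_notMem_W1_union_W2 hj hi (htop h)
  have := mem_W1_union_W2.mp (htop' hjτ)
  have hi' := mem_sigC.mp hi
  refine ⟨by omega, Nat.le_of_not_lt fun hii' => hiτ (hbot' ?_)⟩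
  exact mem_botIJ.mpr (Or.inr ⟨hi', hii'⟩)

lemma eq_of_mem_preIntervals {p q : Finset ℕ × Finset ℕ} (hp : p ∈ preIntervals d k)
    (hq : q ∈ preIntervals d k) (hp1 : p.1 ⊆ τ) (hp2 : τ ⊆ p.2) (hq1 : q.1 ⊆ τ)
    (hq2 : τ ⊆ q.2) : p = q := by
  rcases mem_preIntervals.mp hp with rfl | ⟨j, hj, i, hi, rfl⟩ <;>
    rcases mem_preIntervals.mp hq with rfl | ⟨j', hj', i', hi', rfl⟩
  · rfl
  · exact absurd (hp1.trans hq2) (sigC_not_subset_W1_union_W2 hj' hi')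
  · exact absurd (hq1.trans hp2) (sigC_not_subset_W1_union_W2 hj hi)
  · obtain ⟨hjj', hii'⟩ := le_of_mem_IJ_of_mem_IJ hj hi hp1 hp2 hq1 hq2
    obtain ⟨hj'j, hi'i⟩ := le_of_mem_IJ_of_mem_IJ hj' hi' hq1 hq2 hp1 hp2
    rw [le_antisymm hjj' hj'j, le_antisymm hii' hi'i]

lemma eq_of_mem_allIntervals {p q : Finset ℕ × Finset ℕ} (hτ : τ ≠ sigC d k)
    (hp : p ∈ allIntervals d k) (hq : q ∈ allIntervals d k) (hp1 : p.1 ⊆ τ) (hp2 : τ ⊆ p.2)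
    (hq1 : q.1 ⊆ τ) (hq2 : τ ⊆ q.2) : p = q := by
  rcases mem_allIntervals.mp hp with rfl | hp <;> rcases mem_allIntervals.mp hq with rfl | hq
  · rfl
  · exact absurd (eq_sigC_of_mem_preIntervals_of_subset_D2 hq hq1 hq2 hp2) hτ
  · exact absurd (eq_sigC_of_mem_preIntervals_of_subset_D2 hp hp1 hp2 hq2) hτ
  · exact eq_of_mem_preIntervals hp hq hp1 hp2 hq1 hq2

lemma exists_mem_allIntervals (hτ : τ ∈ preExt d k) :
    ∃ p ∈ allIntervals d k, p.1 ⊆ τ ∧ τ ⊆ p.2 := by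
  by_cases hD2 : τ ⊆ D2 d k
  · exact ⟨_, mem_allIntervals.mpr (Or.inl rfl), empty_subset τ, hD2⟩
  by_cases hσ : sigC d k ⊆ τ
  · exact ⟨_, mem_allIntervals.mpr (Or.inr (mem_preIntervals.mpr (Or.inl rfl))), hσ,
      subset_D1_of_sigC_subset hτ hD2 hσ⟩
  · obtain ⟨j, hj, i, hi, hbot, htop⟩ := exists_botIJ_subset_of_not_subset hτ hD2 hσ
    exact ⟨_, mem_allIntervals.mpr (Or.inr (mem_preIntervals.mpr
      (Or.inr ⟨j, hj, i, hi, rfl⟩))), hbot, htop⟩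

lemma mem_insert_sigC_relF {e : Finset ℕ} :
    e ∈ insert (sigC d k) (relF (preExt d k) (D2 d k)) ↔
      e = sigC d k ∨ (e ∈ preExt d k ∧ ¬ e ⊆ D2 d k) := by
  rw [mem_insert, relF, mem_filter]

lemma mem_preExt_of_mem_insert_sigC_relF {e : Finset ℕ}
    (he : e ∈ insert (sigC d k) (relF (preExt d k) (D2 d k))) : e ∈ preExt d k := by
  rcases mem_insert_sigC_relF.mp he with rfl | ⟨he, -⟩
  · exact isComplex_preExt _ isPreExtGenerator_D1.mem_preExt _ sigC_subset_D1
  · exact he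

lemma mem_insert_sigC_relF_of_mem_preIntervals {p : Finset ℕ × Finset ℕ} {e : Finset ℕ}
    (hp : p ∈ preIntervals d k) (h1 : p.1 ⊆ e) (h2 : e ⊆ p.2) :
    e ∈ insert (sigC d k) (relF (preExt d k) (D2 d k)) := by
  rw [mem_insert_sigC_relF]
  by_cases hD2 : e ⊆ D2 d k
  · exact Or.inl (eq_sigC_of_mem_preIntervals_of_subset_D2 hp h1 h2 hD2)
  · exact Or.inr ⟨isComplex_preExt _ (isPreExtGenerator_snd_of_mem_preIntervals hp).mem_preExt
      _ h2, hD2⟩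

lemma isPartitioning_preIntervals :
    IsPartitioning (preIntervals d k) (insert (sigC d k) (relF (preExt d k) (D2 d k))) := by
  refine ⟨fun p hp => ⟨fst_subset_snd_of_mem_preIntervals hp,
      mem_insert_sigC_relF_of_mem_preIntervals hp (fst_subset_snd_of_mem_preIntervals hp)
        Subset.rfl,
      fun c hc => (isPreExtGenerator_snd_of_mem_preIntervals hp).eq_of_subset
        (mem_preExt_of_mem_insert_sigC_relF hc)⟩,
    fun p hp e => mem_insert_sigC_relF_of_mem_preIntervals hp, fun e he => ?_⟩
  obtain ⟨p, hp, hpe⟩ : ∃ p ∈ preIntervals d k, p.1 ⊆ e ∧ e ⊆ p.2 := by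
    rcases mem_insert_sigC_relF.mp he with rfl | ⟨he, hD2⟩
    · exact ⟨_, mem_preIntervals.mpr (Or.inl rfl), Subset.rfl, sigC_subset_D1⟩
    · obtain ⟨p, hp, h1, h2⟩ := exists_mem_allIntervals he
      rcases mem_allIntervals.mp hp with rfl | hp
      · exact absurd h2 hD2
      · exact ⟨p, hp, h1, h2⟩
  exact ⟨p, ⟨hp, hpe⟩, fun q ⟨hq, hq1, hq2⟩ => eq_of_mem_preIntervals hq hp hq1 hq2 hpe.1 hpe.2⟩

end PreExt

/-- The canonical construction is a `(d,k)`-prepartition extender: the intervals `I`, `I'`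
and `I_{i,j}` cover every face of `Δ = preExt d k`, every face other than `σ` lies in
exactly one of them while `σ` lies in exactly `I` and `I'`; consequently `I` together with
the `I_{i,j}` form a partitioning of `(Δ,⟨D₂⟩) ∪ {σ}`, so `Δ` is a `(d,k)`-prepartition
extender with specified facet `D₂` and specified face `σ`. -/
theorem canonical_prepartition_extender (d k : ℤ) (hk : -1 ≤ k) (hkd : k ≤ d) :
    -- `Δ` is a pure `d`-dimensional complex with facet `D₂` and `k`-face `σ ⊆ D₂`
    (IsComplex (preExt d k) ∧ PureDim (preExt d k) d ∧
      IsFacet (preExt d k) (D2 d k) ∧ sigC d k ⊆ D2 d k ∧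
      ((sigC d k).card : ℤ) = k + 1) ∧
    -- the intervals `I`, `I'`, `I_{i,j}` cover every face of `Δ`
    (∀ τ ∈ preExt d k, ∃ p ∈ allIntervals d k, p.1 ⊆ τ ∧ τ ⊆ p.2) ∧
    -- `σ` lies in both `I` and `I'`, and in none of the `I_{i,j}`
    (sigC d k ⊆ D1 d k ∧ sigC d k ⊆ D2 d k ∧
      ∀ p ∈ preIJ d k, ¬ (p.1 ⊆ sigC d k ∧ sigC d k ⊆ p.2)) ∧
    -- every face other than `σ` lies in exactly one of the intervals
    (∀ τ ∈ preExt d k, τ ≠ sigC d k →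
      ∃! p : Finset ℕ × Finset ℕ, p ∈ allIntervals d k ∧ p.1 ⊆ τ ∧ τ ⊆ p.2) ∧
    -- consequently, `I` and the `I_{i,j}` partition `(Δ,⟨D₂⟩) ∪ {σ}`
    IsPartitioning (preIntervals d k) (insert (sigC d k) (relF (preExt d k) (D2 d k))) := by
  have hσ : ((sigC d k).card : ℤ) = k + 1 := by rw [card_sigC]; omega
  refine ⟨⟨isComplex_preExt, pureDim_preExt hk hkd, isPreExtGenerator_D2.isFacet,
      sigC_subset_D2, hσ⟩,
    fun τ => exists_mem_allIntervals, ⟨sigC_subset_D1, sigC_subset_D2, fun p hp => ?_⟩,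
    fun τ hτ hne => ?_, isPartitioning_preIntervals⟩
  · obtain ⟨j, hj, i, hi, rfl⟩ := mem_preIJ.mp hp
    exact fun h => sigC_not_subset_W1_union_W2 hj hi h.2
  · obtain ⟨p, hp, hpτ⟩ := exists_mem_allIntervals hτ
    exact ⟨p, ⟨hp, hpτ⟩, fun q ⟨hq, hq1, hq2⟩ =>
      eq_of_mem_allIntervals hne hq hp hq1 hq2 hpτ.1 hpτ.2⟩
end

section
/- The boundary complex of the (d+1)-simplex on vertex set [d+2] (i.e., the complex of all proper subsets of [d+2]) is a (d,d−1)-prepartition extender, with specified facet F = {2,3,…,d+2} and specified (d−1)-dimensional face σ = {3,4,…,d+2}. -/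
/-- The boundary complex of the `(d+1)`-simplex on vertex set `[d+2]`:
all proper subsets of `[d+2]`. -/
def bdSimplex (d : ℕ) : Finset (Finset ℕ) :=
  (Finset.Icc 1 (d + 2)).powerset.filter (fun τ => τ ≠ Finset.Icc 1 (d + 2))

/-!
The boundary of the simplex on `V` consists of the proper subsets of `V`; each lies in some
`V \ {v}`, so it is pure with facets the sets of size `|V| - 1`. The faces not contained in the
facet `V \ {a}` are the proper subsets containing `a`. Together with `σ = V \ {a, b}` they are
partitioned by `[σ, V \ {b}]` and, for each `j ∈ σ`, by `[{a} ∪ {x ∈ σ | x < j}, V \ {j}]`: a face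
containing `a` but not all of `σ` lies exactly in the interval of the least vertex of `σ` it misses.
-/

open Finset

lemma bdSimplex_eq_ssubsets (d : ℕ) : bdSimplex d = (Icc 1 (d + 2)).ssubsets := by
  ext τ
  simp [bdSimplex, ssubset_iff_subset_ne]

lemma isComplex_ssubsets (V : Finset ℕ) : IsComplex V.ssubsets := fun _ hσ _ hτ =>
  mem_ssubsets.2 (hτ.trans_ssubset (mem_ssubsets.1 hσ))

lemma eq_of_subset_of_ssubset_of_card_add_one {F G V : Finset ℕ} (hFG : F ⊆ G) (hGV : G ⊂ V)
    (hF : #F + 1 = #V) : F = G :=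
  eq_of_subset_of_card_le hFG (by have := card_lt_card hGV; omega)

lemma isFacet_ssubsets_iff {V F : Finset ℕ} : IsFacet V.ssubsets F ↔ F ⊆ V ∧ #F + 1 = #V := by
  simp only [IsFacet, mem_ssubsets]
  constructor
  · rintro ⟨hFV, hmax⟩
    refine ⟨hFV.subset, le_antisymm (card_lt_card hFV) ?_⟩
    obtain ⟨x, hxV, hxF⟩ := exists_of_ssubset hFV
    by_contra! hsmall
    have hxF' : insert x F ⊂ V :=
      (insert_subset hxV hFV.subset).ssubset_of_ne fun h => by
        rw [← h, card_insert_of_notMem hxF] at hsmall; omega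
    exact hxF (hmax _ hxF' (subset_insert x F) ▸ mem_insert_self x F)
  · rintro ⟨hFV, hcard⟩
    exact ⟨hFV.ssubset_of_ne (by rintro rfl; omega),
      fun G hGV hFG => eq_of_subset_of_ssubset_of_card_add_one hFG hGV hcard⟩

lemma pureDim_ssubsets {V : Finset ℕ} (hV : V.Nonempty) :
    PureDim V.ssubsets ((#V : ℤ) - 2) :=
  ⟨⟨∅, empty_mem_ssubsets hV⟩, fun _ hF => by have := (isFacet_ssubsets_iff.1 hF).2; omega⟩

lemma isLeast_sdiff_iff {α : Type*} [LinearOrder α] {s e : Finset α} {k : α} :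
    IsLeast (↑(s \ e) : Set α) k ↔ k ∈ s ∧ k ∉ e ∧ s.filter (· < k) ⊆ e := by
  simp only [IsLeast, lowerBounds, coe_sdiff, Set.mem_sdiff, mem_coe, Set.mem_ofPred_eq,
    subset_iff, mem_filter]
  rw [and_assoc]
  refine and_congr_right fun _ => and_congr_right fun _ => ⟨fun h x hx => ?_, fun h x hx => ?_⟩
  · by_contra hxe; exact absurd (h ⟨hx.1, hxe⟩) (not_le.2 hx.2)
  · by_contra! hxk; exact hx.2 (h ⟨hx.1, hxk⟩)

section Partition

variable {V : Finset ℕ} {a b : ℕ}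

lemma mem_relF_ssubsets_erase {τ : Finset ℕ} :
    τ ∈ relF V.ssubsets (V.erase a) ↔ τ ⊂ V ∧ a ∈ τ := by
  simp only [relF, mem_filter, mem_ssubsets, subset_erase, not_and, not_not]
  exact and_congr_right fun h => ⟨fun h' => h' h.subset, fun h' _ => h'⟩

def extenderPoset (V : Finset ℕ) (a b : ℕ) : Finset (Finset ℕ) :=
  insert (V \ {a, b}) (relF V.ssubsets (V.erase a))

lemma mem_extenderPoset {e : Finset ℕ} :
    e ∈ extenderPoset V a b ↔ e = V \ {a, b} ∨ (e ⊂ V ∧ a ∈ e) := by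
  rw [extenderPoset, mem_insert, mem_relF_ssubsets_erase]

lemma ssubset_of_mem_extenderPoset (ha : a ∈ V) {e : Finset ℕ} (he : e ∈ extenderPoset V a b) :
    e ⊂ V := by
  rcases mem_extenderPoset.1 he with rfl | he
  · exact (ssubset_iff_of_subset sdiff_subset).2 ⟨a, ha, by simp⟩
  · exact he.1

lemma erase_mem_extenderPoset (ha : a ∈ V) {v : ℕ} (hv : v ∈ V) (hva : v ≠ a) :
    V.erase v ∈ extenderPoset V a b :=
  mem_extenderPoset.2 (Or.inr ⟨erase_ssubset hv, mem_erase.2 ⟨hva.symm, ha⟩⟩)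

lemma erase_eq_of_subset_of_mem_extenderPoset (ha : a ∈ V) {v : ℕ} (hv : v ∈ V) {c : Finset ℕ}
    (hc : c ∈ extenderPoset V a b) (hvc : V.erase v ⊆ c) : V.erase v = c :=
  eq_of_subset_of_ssubset_of_card_add_one hvc (ssubset_of_mem_extenderPoset ha hc)
    (card_erase_add_one hv)

def extenderPartition (V : Finset ℕ) (a b : ℕ) : Finset (Finset ℕ × Finset ℕ) :=
  insert (V \ {a, b}, V.erase b)
    ((V \ {a, b}).image fun j => (insert a ((V \ {a, b}).filter (· < j)), V.erase j))

lemma mem_extenderPartition {p : Finset ℕ × Finset ℕ} :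
    p ∈ extenderPartition V a b ↔ p = (V \ {a, b}, V.erase b) ∨
      ∃ j ∈ V \ {a, b}, p = (insert a ((V \ {a, b}).filter (· < j)), V.erase j) := by
  simp only [extenderPartition, mem_insert, mem_image, eq_comm]

lemma insert_filter_subset_and_subset_erase_iff {e : Finset ℕ} {j : ℕ} (hj : j ∈ V \ {a, b}) :
    (insert a ((V \ {a, b}).filter (· < j)) ⊆ e ∧ e ⊆ V.erase j) ↔
      (a ∈ e ∧ e ⊆ V ∧ IsLeast ↑((V \ {a, b}) \ e) j) := by
  rw [insert_subset_iff, subset_erase, isLeast_sdiff_iff]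
  tauto

lemma extenderPartition_top_maximal (ha : a ∈ V) (hb : b ∈ V) (hab : a ≠ b)
    {p : Finset ℕ × Finset ℕ} (hp : p ∈ extenderPartition V a b) :
    p.1 ⊆ p.2 ∧ p.2 ∈ extenderPoset V a b ∧ ∀ c ∈ extenderPoset V a b, p.2 ⊆ c → p.2 = c := by
  rcases mem_extenderPartition.1 hp with rfl | ⟨j, hj, rfl⟩
  · refine ⟨fun x hx => ?_, erase_mem_extenderPoset ha hb hab.symm,
      fun _ => erase_eq_of_subset_of_mem_extenderPoset ha hb⟩
    simp only [mem_sdiff, mem_insert, mem_singleton, not_or] at hx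
    exact mem_erase.2 ⟨hx.2.2, hx.1⟩
  · simp only [mem_sdiff, mem_insert, mem_singleton, not_or] at hj
    refine ⟨insert_subset (mem_erase.2 ⟨Ne.symm hj.2.1, ha⟩) fun x hx => ?_,
      erase_mem_extenderPoset ha hj.1 hj.2.1,
      fun _ => erase_eq_of_subset_of_mem_extenderPoset ha hj.1⟩
    exact mem_erase.2 ⟨(mem_filter.1 hx).2.ne, (mem_sdiff.1 (mem_filter.1 hx).1).1⟩

lemma mem_extenderPoset_of_mem_interval (hb : b ∈ V) {p : Finset ℕ × Finset ℕ}
    (hp : p ∈ extenderPartition V a b) {e : Finset ℕ} (hpe : p.1 ⊆ e) (hep : e ⊆ p.2) :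
    e ∈ extenderPoset V a b := by
  rw [mem_extenderPoset]
  rcases mem_extenderPartition.1 hp with rfl | ⟨j, hj, rfl⟩
  · by_cases hae : a ∈ e
    · exact Or.inr ⟨hep.trans_ssubset (erase_ssubset hb), hae⟩
    · refine Or.inl (subset_antisymm (fun x hx => ?_) hpe)
      have hx' := mem_erase.1 (hep hx)
      simp only [mem_sdiff, mem_insert, mem_singleton, not_or]
      exact ⟨hx'.2, fun hxa => hae (hxa ▸ hx), hx'.1⟩
  · exact Or.inr ⟨hep.trans_ssubset (erase_ssubset (mem_sdiff.1 hj).1), hpe (mem_insert_self _ _)⟩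

lemma existsUnique_interval_of_subset {e : Finset ℕ} (he : e ∈ extenderPoset V a b)
    (hσe : V \ {a, b} ⊆ e) : ∃! p, p ∈ extenderPartition V a b ∧ p.1 ⊆ e ∧ e ⊆ p.2 := by
  have heb : e ⊆ V.erase b := by
    rcases mem_extenderPoset.1 he with rfl | ⟨heV, hae⟩
    · exact fun x hx => mem_erase.2 ⟨fun hxb => (mem_sdiff.1 hx).2 (by simp [hxb]),
        (mem_sdiff.1 hx).1⟩
    · refine subset_erase.2 ⟨heV.subset, fun hbe => not_subset_of_ssubset heV ?_⟩
      exact (sdiff_le_iff.1 hσe).trans (union_subset (insert_subset hae (by simpa)) le_rfl)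
  refine ⟨_, ⟨mem_insert_self _ _, hσe, heb⟩, ?_⟩
  rintro p ⟨hp, -, hep⟩
  rcases mem_extenderPartition.1 hp with rfl | ⟨j, hj, rfl⟩
  · rfl
  · exact absurd (hep (hσe hj)) (notMem_erase j V)

lemma existsUnique_interval_of_not_subset {e : Finset ℕ} (he : e ∈ extenderPoset V a b)
    (hσe : ¬ V \ {a, b} ⊆ e) : ∃! p, p ∈ extenderPartition V a b ∧ p.1 ⊆ e ∧ e ⊆ p.2 := by
  obtain ⟨heV, hae⟩ : e ⊂ V ∧ a ∈ e :=
    (mem_extenderPoset.1 he).resolve_left (by rintro rfl; exact hσe le_rfl)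
  obtain ⟨j, hj⟩ : ∃ j, IsLeast (↑((V \ {a, b}) \ e) : Set ℕ) j :=
    ⟨_, isLeast_min' _ (sdiff_nonempty.2 hσe)⟩
  have hjσ : j ∈ V \ {a, b} := (mem_sdiff.1 hj.1).1
  refine ⟨_, ⟨mem_extenderPartition.2 (Or.inr ⟨j, hjσ, rfl⟩),
    (insert_filter_subset_and_subset_erase_iff hjσ).2 ⟨hae, heV.subset, hj⟩⟩, ?_⟩
  rintro p ⟨hp, hpe, hep⟩
  rcases mem_extenderPartition.1 hp with rfl | ⟨k, hk, rfl⟩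
  · exact absurd hpe hσe
  · rw [((insert_filter_subset_and_subset_erase_iff hk).1 ⟨hpe, hep⟩).2.2.unique hj]

theorem partitionable_extenderPoset (ha : a ∈ V) (hb : b ∈ V) (hab : a ≠ b) :
    Partitionable (extenderPoset V a b) :=
  ⟨extenderPartition V a b, fun _ => extenderPartition_top_maximal ha hb hab,
    fun _ hp _ => mem_extenderPoset_of_mem_interval hb hp, fun e he =>
      if hσe : V \ {a, b} ⊆ e then existsUnique_interval_of_subset he hσe
      else existsUnique_interval_of_not_subset he hσe⟩

end Partition

/-- The boundary of the `(d+1)`-simplex on `[d+2]` is a `(d,d-1)`-prepartition extender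
with specified facet `F = {2,…,d+2}` and specified `(d-1)`-dimensional face
`σ = {3,…,d+2}`: it is a pure `d`-dimensional complex, `F` is a facet, `σ ⊆ F` has
dimension `d-1`, and the poset `(Δ,⟨F⟩) ∪ {σ}` is partitionable. -/
theorem boundary_simplex_prepartition_extender (d : ℕ) :
    IsComplex (bdSimplex d) ∧ PureDim (bdSimplex d) (d : ℤ) ∧
    IsFacet (bdSimplex d) (Finset.Icc 2 (d + 2)) ∧
    Finset.Icc 3 (d + 2) ⊆ Finset.Icc 2 (d + 2) ∧
    ((Finset.Icc 3 (d + 2)).card : ℤ) = ((d : ℤ) - 1) + 1 ∧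
    Partitionable
      (insert (Finset.Icc 3 (d + 2)) (relF (bdSimplex d) (Finset.Icc 2 (d + 2)))) := by
  have hF : Icc 2 (d + 2) = (Icc 1 (d + 2)).erase 1 := by
    rw [Icc_erase_left, ← Icc_add_one_left_eq_Ioc]; rfl
  have hσ : Icc 3 (d + 2) = Icc 1 (d + 2) \ {1, 2} := by
    ext; simp only [mem_Icc, mem_sdiff, mem_insert, mem_singleton]; omega
  have h1 : 1 ∈ Icc 1 (d + 2) := by simp
  refine ⟨?_, ?_, ?_, Icc_subset_Icc (by norm_num) le_rfl, by simp, ?_⟩ <;>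
    rw [bdSimplex_eq_ssubsets]
  · exact isComplex_ssubsets _
  · simpa using pureDim_ssubsets ⟨1, h1⟩
  · rw [hF]
    exact isFacet_ssubsets_iff.2 ⟨erase_subset _ _, card_erase_add_one h1⟩
  · rw [hF, hσ]
    exact partitionable_extenderPoset h1 (by simp) (by norm_num)
end

section
/- Let Δ be a pure d-dimensional simplicial complex and let Γ be any partition extender of Δ. Then for all 0 ≤ i ≤ d+1, h_i(Δ) equals the number of Boolean intervals with bottom element of cardinality i in any partitioning of the face poset of Γ, minus the number of Boolean intervals with bottom element of cardinality i in any partitioning of the face poset of the relative complex (Γ,Δ). -/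
/-- `fcount P j` is the number of faces of `P` of cardinality `j`
(i.e. `f_{j-1}`, the number of `(j-1)`-dimensional faces). -/
def fcount (P : Finset (Finset ℕ)) (j : ℕ) : ℕ :=
  (P.filter (fun σ => σ.card = j)).card

/-- `P` has dimension `d`: it is nonempty and its largest face has cardinality `d + 1`. -/
def dimIs (P : Finset (Finset ℕ)) (d : ℤ) : Prop :=
  P.Nonempty ∧ ((P.sup Finset.card : ℕ) : ℤ) = d + 1

open Polynomial in
/-- The `h`-vector of a `d`-dimensional (relative) complex `P`, defined by the polynomial
identity `∑_{i=0}^{d+1} f_{i-1} (x-1)^{d-i+1} = ∑_{i=0}^{d+1} h_i x^{d-i+1}`: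
`hvec P d i` is the coefficient of `x^{d+1-i}` in `∑_{j=0}^{d+1} f_{j-1} (x-1)^{d+1-j}`. -/
noncomputable def hvec (P : Finset (Finset ℕ)) (d i : ℕ) : ℤ :=
  (∑ j ∈ Finset.range (d + 2),
      (fcount P j : ℤ) • ((X - 1 : Polynomial ℤ) ^ (d + 1 - j))).coeff (d + 1 - i)

/-! Over a Boolean interval `[σ, τ]` with `#τ = d + 1`, the sum of `(x - 1) ^ (d + 1 - #e)` is
`x ^ (d + 1 - #σ)`. Hence for a partitioning whose tops all have `d + 1` elements, the polynomial
defining the `h`-vector is `∑ x ^ (d + 1 - #bottom)`, and `h_i` counts the bottoms of size `i`.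
The tops of partitionings of `Γ` and of `(Γ, Δ)` are facets of `Γ` (for `(Γ, Δ)` because `Δ` is
closed under subsets), so purity of `Γ` applies to both, and `h(Γ) = h(Δ) + h(Γ, Δ)` since the
face numbers are additive. -/

open Finset Polynomial

theorem sum_Icc_pow_card_sdiff {α R : Type*} [DecidableEq α] [CommSemiring R] (x : R)
    {s t : Finset α} (h : s ⊆ t) :
    ∑ u ∈ Icc s t, x ^ (#t - #u) = (1 + x) ^ (#t - #s) := by
  rw [Icc_eq_image_powerset h, ← card_sdiff_of_subset h, ← sum_pow_mul_eq_add_pow,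
    sum_image]
  · refine sum_congr rfl fun v hv => ?_
    have hvs : Disjoint s v := disjoint_of_subset_right (mem_powerset.1 hv) disjoint_sdiff
    rw [one_pow, one_mul, card_union_of_disjoint hvs, card_sdiff_of_subset h, Nat.sub_sub]
  · intro v hv w hw hvw
    have hv' := disjoint_of_subset_right (mem_powerset.1 hv) disjoint_sdiff
    have hw' := disjoint_of_subset_right (mem_powerset.1 hw) disjoint_sdiff
    rw [← union_sdiff_cancel_left hv', ← union_sdiff_cancel_left hw', show s ∪ v = s ∪ w from hvw]

theorem sum_range_fcount_smul {M : Type*} [AddCommGroup M] {P : Finset (Finset ℕ)} {n : ℕ}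
    (h : ∀ e ∈ P, #e < n) (f : ℕ → M) :
    ∑ j ∈ range n, (fcount P j : ℤ) • f j = ∑ e ∈ P, f #e := by
  rw [← sum_fiberwise_of_maps_to (g := card) fun e he => mem_range.2 (h e he)]
  refine sum_congr rfl fun j _ => ?_
  rw [sum_congr rfl fun e he => congrArg f (mem_filter.1 he).2, sum_const, fcount, natCast_zsmul]

theorem fcount_add_fcount_sdiff {Δ Γ : Finset (Finset ℕ)} (h : Δ ⊆ Γ) (j : ℕ) :
    fcount Δ j + fcount (Γ \ Δ) j = fcount Γ j := by
  rw [fcount, fcount, fcount, ← card_union_of_disjoint (disjoint_filter_filter disjoint_sdiff),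
    ← filter_union, union_sdiff_of_subset h]

theorem hvec_add_hvec_sdiff {Δ Γ : Finset (Finset ℕ)} (h : Δ ⊆ Γ) (d i : ℕ) :
    hvec Δ d i + hvec (Γ \ Δ) d i = hvec Γ d i := by
  simp only [hvec, ← coeff_add, ← sum_add_distrib, ← add_smul, ← Nat.cast_add,
    fcount_add_fcount_sdiff h]

namespace IsPartitioning

variable {S : Finset (Finset ℕ × Finset ℕ)} {P : Finset (Finset ℕ)}

theorem eq_biUnion_Icc (hS : IsPartitioning S P) : P = S.biUnion fun p => Icc p.1 p.2 := by
  ext e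
  simp only [mem_biUnion, mem_Icc]
  constructor
  · intro he
    obtain ⟨p, ⟨hp, hpe, hep⟩, -⟩ := hS.2.2 e he
    exact ⟨p, hp, hpe, hep⟩
  · rintro ⟨p, hp, hpe, hep⟩
    exact hS.2.1 p hp e hpe hep

theorem pairwiseDisjoint_Icc (hS : IsPartitioning S P) :
    (S : Set (Finset ℕ × Finset ℕ)).PairwiseDisjoint fun p => Icc p.1 p.2 := by
  intro p hp q hq hpq
  refine disjoint_left.2 fun e hep heq => hpq ?_
  rw [mem_Icc] at hep heq
  obtain ⟨r, -, hr⟩ := hS.2.2 e (hS.2.1 p hp e hep.1 hep.2)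
  exact (hr p ⟨hp, hep⟩).trans (hr q ⟨hq, heq⟩).symm

theorem sum_eq_sum_Icc {M : Type*} [AddCommMonoid M] (hS : IsPartitioning S P)
    (f : Finset ℕ → M) : ∑ e ∈ P, f e = ∑ p ∈ S, ∑ e ∈ Icc p.1 p.2, f e := by
  rw [hS.eq_biUnion_Icc, sum_biUnion hS.pairwiseDisjoint_Icc]

theorem card_lt_of_mem {n : ℕ} (hS : IsPartitioning S P) (htop : ∀ p ∈ S, #p.2 = n)
    {e : Finset ℕ} (he : e ∈ P) : #e < n + 1 := by
  obtain ⟨p, ⟨hp, -, hep⟩, -⟩ := hS.2.2 e he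
  exact Nat.lt_succ_of_le (htop p hp ▸ card_le_card hep)

theorem hvec_eq_card_filter {d i : ℕ} (hS : IsPartitioning S P)
    (htop : ∀ p ∈ S, #p.2 = d + 1) (hi : i ≤ d + 1) :
    hvec P d i = #(S.filter fun p => #p.1 = i) := by
  have hbox : ∀ p ∈ S, ∑ e ∈ Icc p.1 p.2, (X - 1 : ℤ[X]) ^ (d + 1 - #e) = X ^ (d + 1 - #p.1) :=
    fun p hp => by
      rw [← htop p hp, sum_Icc_pow_card_sdiff _ (hS.1 p hp).1, add_sub_cancel]
  rw [hvec, sum_range_fcount_smul (fun e he => hS.card_lt_of_mem htop he), hS.sum_eq_sum_Icc,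
    sum_congr rfl hbox, finsetSum_coeff, ← sum_boole]
  refine sum_congr rfl fun p hp => ?_
  have := htop p hp ▸ card_le_card (hS.1 p hp).1
  rw [coeff_X_pow]
  exact if_congr (by omega) rfl rfl

theorem isFacet_snd (hS : IsPartitioning S P) {p : Finset ℕ × Finset ℕ} (hp : p ∈ S) :
    IsFacet P p.2 :=
  (hS.1 p hp).2

theorem isFacet_snd_of_sdiff {Δ Γ : Finset (Finset ℕ)} (hΔ : IsComplex Δ)
    (hS : IsPartitioning S (Γ \ Δ)) {p : Finset ℕ × Finset ℕ} (hp : p ∈ S) : IsFacet Γ p.2 := by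
  obtain ⟨hmem, hmax⟩ := hS.isFacet_snd hp
  refine ⟨(mem_sdiff.1 hmem).1, fun G hG hpG => hmax G (mem_sdiff.2 ⟨hG, fun hGΔ => ?_⟩) hpG⟩
  exact (mem_sdiff.1 hmem).2 (hΔ G hGΔ p.2 hpG)

end IsPartitioning

theorem PureDim.card_eq_of_isFacet {Γ : Finset (Finset ℕ)} {d : ℕ} (h : PureDim Γ d)
    {F : Finset ℕ} (hF : IsFacet Γ F) : #F = d + 1 := by
  exact_mod_cast h.2 F hF

theorem h_vector_from_partition_extender_general (d : ℕ) (Δ Γ : Finset (Finset ℕ))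
    (hΔ : IsComplex Δ)
    (hΓp : PureDim Γ (d : ℤ)) (hsub : Δ ⊆ Γ)
    (S T : Finset (Finset ℕ × Finset ℕ))
    (hS : IsPartitioning S Γ) (hT : IsPartitioning T (Γ \ Δ))
    (i : ℕ) (hi : i ≤ d + 1) :
    hvec Δ d i =
      ((S.filter (fun p => p.1.card = i)).card : ℤ) -
        ((T.filter (fun p => p.1.card = i)).card : ℤ) := by
  have htopS : ∀ p ∈ S, #p.2 = d + 1 := fun p hp =>
    hΓp.card_eq_of_isFacet (hS.isFacet_snd hp)
  have htopT : ∀ p ∈ T, #p.2 = d + 1 := fun p hp =>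
    hΓp.card_eq_of_isFacet (hT.isFacet_snd_of_sdiff hΔ hp)
  rw [← hS.hvec_eq_card_filter htopS hi, ← hT.hvec_eq_card_filter htopT hi,
    ← hvec_add_hvec_sdiff hsub, add_sub_cancel_right]

/-- If `Δ` is a pure `d`-dimensional complex and `Γ` is any partition extender of `Δ`,
then for all `0 ≤ i ≤ d+1`, `h_i(Δ)` equals the number of Boolean intervals with bottom
element of cardinality `i` in any partitioning of `Γ`, minus the number of Boolean
intervals with bottom element of cardinality `i` in any partitioning of the relative
complex `(Γ,Δ)`. -/
theorem h_vector_from_partition_extender (d : ℕ) (Δ Γ : Finset (Finset ℕ))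
    (hΔ : IsComplex Δ) (hΔp : PureDim Δ (d : ℤ))
    (hΓ : IsComplex Γ) (hΓp : PureDim Γ (d : ℤ)) (hsub : Δ ⊆ Γ)
    (S T : Finset (Finset ℕ × Finset ℕ))
    (hS : IsPartitioning S Γ) (hT : IsPartitioning T (Γ \ Δ))
    (i : ℕ) (hi : i ≤ d + 1) :
    hvec Δ d i =
      ((S.filter (fun p => p.1.card = i)).card : ℤ) -
        ((T.filter (fun p => p.1.card = i)).card : ℤ) :=
  h_vector_from_partition_extender_general d Δ Γ hΔ hΓp hsub S T hS hT i hi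
end

section
/- Let Δ be a (possibly nonpure) simplicial complex. Then there exists a simplicial complex Γ ⊇ Δ with dim(Γ) = dim(Δ) and d_Δ(σ) = d_Γ(σ) for all faces σ ∈ Δ, such that both Γ and the relative complex (Γ,Δ) admit layer-compatible partitionings of their face posets. -/
/-- `dcard amb σ` is `d_amb(σ) + 1`: the largest cardinality of a face of `amb`
containing `σ` (so `d_amb(σ)` is the largest dimension of such a face). -/
def dcard (amb : Finset (Finset ℕ)) (σ : Finset ℕ) : ℕ :=
  (amb.filter (fun τ => σ ⊆ τ)).sup Finset.card

/-- The `f`-triangle: `ftri amb P i j` is the number of faces `σ` of `P` with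
`d(σ) = i - 1` (measured in the ambient complex `amb`) and `dim σ = j - 1`,
i.e. `dcard amb σ = i` and `|σ| = j`. -/
def ftri (amb P : Finset (Finset ℕ)) (i j : ℕ) : ℕ :=
  (P.filter (fun σ => dcard amb σ = i ∧ σ.card = j)).card

/-- The `h`-triangle: `h_{i,j} = ∑_{m=0}^{j} (-1)^{j-m} C(i-m, j-m) f_{i,m}`. -/
def htri (amb P : Finset (Finset ℕ)) (i j : ℕ) : ℤ :=
  ∑ m ∈ Finset.range (j + 1),
    (-1 : ℤ) ^ (j - m) * (Nat.choose (i - m) (j - m) : ℤ) * (ftri amb P i m : ℤ)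

/-- `F` is a maximal face (facet) of the set of faces `P`. -/
def MaxFace (P : Finset (Finset ℕ)) (F : Finset ℕ) : Prop :=
  F ∈ P ∧ ∀ G ∈ P, F ⊆ G → F = G

open scoped Classical in
/-- The (relative) complex generated by the facets of `P` of dimension `≥ r`:
the faces of `P` contained in some maximal face of `P` of cardinality `≥ r + 1`. -/
noncomputable def genGE (P : Finset (Finset ℕ)) (r : ℕ) : Finset (Finset ℕ) :=
  P.filter (fun e => ∃ F, MaxFace P F ∧ r + 1 ≤ F.card ∧ e ⊆ F)

/-- A layer-compatible partitioning of the set of faces `P`: a partitioning such that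
for every `r`, the intervals topped by facets of dimension `≥ r` form a partitioning of
the (relative) complex generated by the facets of dimension `≥ r`. -/
def LayerCompatible (S : Finset (Finset ℕ × Finset ℕ)) (P : Finset (Finset ℕ)) : Prop :=
  IsPartitioning S P ∧
    ∀ r : ℕ, IsPartitioning (S.filter (fun p => r + 1 ≤ p.2.card)) (genGE P r)

/-!
Join every face `σ` of `Δ` with the boundary of a cross-polytope of dimension `d_Δ(σ) - dim σ` on
fresh vertices, the same vertex pairs being used for all faces. This dimension can only grow when
passing to a subface, so the result `Γ` is a complex; its facets are the joins of faces `σ` with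
facets of their cross-polytopes and have dimension `d_Δ(σ)`, so `d` and the dimension are preserved.
A partition of the cross-polytope boundary into Boolean intervals, one per facet, then lifts to a
partition of `Γ` in which the intervals topped by facets of dimension `≥ r` cover exactly the faces
generated by those facets. For `(Γ, Δ)` the same works with a partition of the cross-polytope
boundary minus its empty face, whose bottoms are read off the sign changes of an antiperiodic sign
sequence.
-/

namespace PartitionExtender

open Finset

/-- The face of the cross-polytope on the vertex pairs `N + 2 * i`, `N + 2 * i + 1` with
support `T`, taking the vertex `N + 2 * i + 1` exactly when `i ∈ Y`. -/
def crossFace (N : ℕ) (T Y : Finset ℕ) : Finset ℕ :=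
  T.image fun i => N + 2 * i + if i ∈ Y then 1 else 0

section CrossFace

variable {N : ℕ} {T T' Y Y' : Finset ℕ}

lemma mem_crossFace {v : ℕ} :
    v ∈ crossFace N T Y ↔ ∃ i ∈ T, N + 2 * i + (if i ∈ Y then 1 else 0) = v := by
  simp [crossFace]

lemma le_of_mem_crossFace {v : ℕ} (hv : v ∈ crossFace N T Y) : N ≤ v := by
  obtain ⟨i, -, rfl⟩ := mem_crossFace.mp hv
  omega

lemma crossVertex_inj {i j : ℕ}
    (h : N + 2 * i + (if i ∈ Y then 1 else 0) = N + 2 * j + (if j ∈ Y' then 1 else 0)) :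
    i = j ∧ (i ∈ Y ↔ j ∈ Y') := by
  by_cases hi : i ∈ Y <;> by_cases hj : j ∈ Y' <;> simp [hi, hj] at h ⊢ <;> omega

lemma crossFace_subset_crossFace_iff :
    crossFace N T Y ⊆ crossFace N T' Y' ↔ T ⊆ T' ∧ ∀ i ∈ T, (i ∈ Y ↔ i ∈ Y') := by
  constructor
  · intro h
    have key : ∀ i ∈ T, i ∈ T' ∧ (i ∈ Y ↔ i ∈ Y') := fun i hi => by
      obtain ⟨j, hj, hji⟩ := mem_crossFace.mp (h (mem_crossFace.mpr ⟨i, hi, rfl⟩))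
      obtain ⟨rfl, hiff⟩ := crossVertex_inj hji
      exact ⟨hj, hiff.symm⟩
    exact ⟨fun i hi => (key i hi).1, fun i hi => (key i hi).2⟩
  · rintro ⟨hT, hY⟩ v hv
    obtain ⟨i, hi, rfl⟩ := mem_crossFace.mp hv
    exact mem_crossFace.mpr ⟨i, hT hi, by simp only [hY i hi]⟩

lemma crossFace_congr (h : ∀ i ∈ T, (i ∈ Y ↔ i ∈ Y')) : crossFace N T Y = crossFace N T Y' :=
  image_congr fun i hi => by simp only [h i hi]

lemma card_crossFace : (crossFace N T Y).card = T.card :=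
  card_image_of_injOn fun _ _ _ _ h => (crossVertex_inj h).1

lemma exists_eq_crossFace_of_subset {e : Finset ℕ} (h : e ⊆ crossFace N T Y) :
    ∃ T' ⊆ T, e = crossFace N T' Y := by
  refine ⟨T.filter fun i => N + 2 * i + (if i ∈ Y then 1 else 0) ∈ e, filter_subset _ _, ?_⟩
  ext v
  constructor
  · intro hv
    obtain ⟨i, hi, rfl⟩ := mem_crossFace.mp (h hv)
    exact mem_crossFace.mpr ⟨i, mem_filter.mpr ⟨hi, hv⟩, rfl⟩
  · intro hv
    obtain ⟨i, hi, rfl⟩ := mem_crossFace.mp hv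
    exact (mem_filter.mp hi).2

variable {σ σ' τ : Finset ℕ}

lemma card_union_crossFace (hσ : ∀ v ∈ σ, v < N) :
    (σ ∪ crossFace N T Y).card = σ.card + T.card := by
  rw [card_union_of_disjoint, card_crossFace]
  exact disjoint_left.mpr fun v hv hv' => (le_of_mem_crossFace hv').not_gt (hσ v hv)

lemma union_crossFace_subset_iff (hσ : ∀ v ∈ σ, v < N) (hσ' : ∀ v ∈ σ', v < N) :
    σ ∪ crossFace N T Y ⊆ σ' ∪ crossFace N T' Y' ↔
      σ ⊆ σ' ∧ crossFace N T Y ⊆ crossFace N T' Y' := by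
  refine ⟨fun h => ⟨fun v hv => ?_, fun v hv => ?_⟩, fun h => union_subset_union h.1 h.2⟩
  · rcases mem_union.mp (h (mem_union_left _ hv)) with h' | h'
    · exact h'
    · exact absurd (le_of_mem_crossFace h') (by grind)
  · rcases mem_union.mp (h (mem_union_right _ hv)) with h' | h'
    · exact absurd (le_of_mem_crossFace hv) (by grind)
    · exact h'

lemma exists_eq_union_crossFace_of_subset (hσ : ∀ v ∈ σ, v < N)
    (h : τ ⊆ σ ∪ crossFace N T Y) : ∃ ρ ⊆ σ, ∃ T' ⊆ T, τ = ρ ∪ crossFace N T' Y := by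
  have hhigh : τ.filter (¬ · < N) ⊆ crossFace N T Y := fun v hv => by
    obtain ⟨hvτ, hvN⟩ := mem_filter.mp hv
    exact (mem_union.mp (h hvτ)).resolve_left fun h' => hvN (hσ v h')
  obtain ⟨T', hT', heq⟩ := exists_eq_crossFace_of_subset hhigh
  refine ⟨τ.filter (· < N), fun v hv => ?_, T', hT', ?_⟩
  · obtain ⟨hvτ, hvN⟩ := mem_filter.mp hv
    exact (mem_union.mp (h hvτ)).resolve_right fun h' => by
      have := le_of_mem_crossFace h'; omega
  · rw [← heq, filter_union_filter_not_eq]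

end CrossFace

/-- The intervals `[crossFace N (β Z) Z, crossFace N (range K) Z]`, `Z ⊆ range K`, partition the
faces of the boundary of the `K`-dimensional cross-polytope that have at least `m` vertices. -/
structure IsSignPartition (m K : ℕ) (β : Finset ℕ → Finset ℕ) : Prop where
  subset_range : ∀ Z ⊆ range K, β Z ⊆ range K
  le_card : ∀ Z ⊆ range K, m ≤ (β Z).card
  existsUnique : ∀ T ⊆ range K, m ≤ T.card → ∀ Y : Finset ℕ,
    ∃! Z : Finset ℕ, Z ⊆ range K ∧ (∀ i ∈ T, (i ∈ Z ↔ i ∈ Y)) ∧ β Z ⊆ T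

lemma isSignPartition_id (K : ℕ) : IsSignPartition 0 K id where
  subset_range _ hZ := hZ
  le_card _ _ := Nat.zero_le _
  existsUnique T hT _ Y := by
    refine ⟨Y ∩ T, ⟨inter_subset_right.trans hT, fun i hi => by simp [hi], inter_subset_right⟩,
      fun Z ⟨_, hagree, hZT⟩ => ?_⟩
    ext i
    by_cases hi : i ∈ T
    · simp [hi, hagree i hi]
    · simp only [mem_inter, hi, and_false, iff_false]
      exact fun hiZ => hi (hZT hiZ)

section TwistedChanges

variable {K : ℕ} {T Y Z Z' : Finset ℕ}

def StableOff (K : ℕ) (T Z : Finset ℕ) : Prop :=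
  ∀ j, j + 1 < K → j + 1 ∉ T → (j ∈ Z ↔ j + 1 ∈ Z)

lemma StableOff.mem_iff_mem (h : StableOff K T Z) {a j : ℕ} (haj : a ≤ j) (hj : j < K)
    (hT : ∀ i ∈ T, a < i → j < i) : a ∈ Z ↔ j ∈ Z := by
  induction j, haj using Nat.le_induction with
  | base => rfl
  | succ n hn ih =>
    refine (ih (by omega) fun i hi hai => ?_).trans (h n hj fun hc => ?_)
    · have := hT i hi hai; omega
    · have := hT _ hc (by omega); omega

lemma StableOff.mem_iff_of_mem_iff (hZ : StableOff K T Z) (hZ' : StableOff K T Z')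
    (hT : ∀ i ∈ T, (i ∈ Z ↔ i ∈ Z')) {a j : ℕ} (ha : a ∈ Z ↔ a ∈ Z') (haj : a ≤ j)
    (hj : j < K) : j ∈ Z ↔ j ∈ Z' := by
  induction j, haj using Nat.le_induction with
  | base => exact ha
  | succ n hn ih =>
    by_cases hnT : n + 1 ∈ T
    · exact hT _ hnT
    · exact (hZ n hj hnT).symm.trans ((ih (by omega)).trans (hZ' n hj hnT))

/-- `j ∈ twistedChanges K Z` iff the antiperiodic extension of `Z ⊆ range K` (containing `j + K`
exactly when it does not contain `j`) changes between positions `j - 1` and `j`. -/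
def twistedChanges (K : ℕ) (Z : Finset ℕ) : Finset ℕ :=
  (range K).filter fun j => if j = 0 then (0 ∈ Z ↔ K - 1 ∈ Z) else ¬(j - 1 ∈ Z ↔ j ∈ Z)

lemma twistedChanges_subset_iff (hK : 0 < K) :
    twistedChanges K Z ⊆ T ↔ (0 ∉ T → ¬(0 ∈ Z ↔ K - 1 ∈ Z)) ∧ StableOff K T Z := by
  constructor
  · intro h
    refine ⟨fun h0 hc => h0 (h (mem_filter.mpr ⟨mem_range.mpr hK, by simpa using hc⟩)),
      fun j hj hjT => by_contra fun hc => hjT (h (mem_filter.mpr ⟨mem_range.mpr hj, ?_⟩))⟩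
    simpa using hc
  · rintro ⟨h0, hstable⟩ j hj
    obtain ⟨hjK, hc⟩ := mem_filter.mp hj
    by_contra hjT
    rcases j with _ | j
    · exact h0 hjT (by simpa using hc)
    · exact (by simpa using hc : ¬(j ∈ Z ↔ j + 1 ∈ Z)) (hstable j (mem_range.mp hjK) hjT)

lemma twistedChanges_nonempty (hK : 0 < K) (Z : Finset ℕ) : (twistedChanges K Z).Nonempty := by
  by_contra h
  obtain ⟨h0, hstable⟩ := (twistedChanges_subset_iff (T := ∅) hK).mp
    (not_nonempty_iff_eq_empty.mp h).subset
  exact h0 (notMem_empty 0) (hstable.mem_iff_mem (Nat.zero_le _) (by omega) (by simp))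

def extendSigns (T Y : Finset ℕ) (b : Bool) : ℕ → Bool
  | 0 => if 0 ∈ T then decide (0 ∈ Y) else b
  | j + 1 => if j + 1 ∈ T then decide (j + 1 ∈ Y) else extendSigns T Y b j

lemma extendSigns_of_mem {b : Bool} {j : ℕ} (hj : j ∈ T) :
    extendSigns T Y b j = decide (j ∈ Y) := by
  cases j <;> simp [extendSigns, hj]

lemma exists_twistedChanges_subset (hT : T ⊆ range K) (hne : T.Nonempty) (Y : Finset ℕ) :
    ∃ Z ⊆ range K, (∀ i ∈ T, (i ∈ Z ↔ i ∈ Y)) ∧ twistedChanges K Z ⊆ T := by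
  set M := T.max' hne
  have hMK : M < K := mem_range.mp (hT (T.max'_mem hne))
  set Z := (range K).filter (extendSigns T Y (!decide (M ∈ Y)) · = true)
  have hagree : ∀ i ∈ T, (i ∈ Z ↔ i ∈ Y) := fun i hi => by
    simp [Z, extendSigns_of_mem hi, mem_range.mp (hT hi)]
  have hstable : StableOff K T Z := fun j hj hjT => by
    simp [Z, extendSigns, hjT, hj, show j < K by omega]
  refine ⟨Z, filter_subset _ _, hagree, (twistedChanges_subset_iff (by omega)).mpr
    ⟨fun h0 => ?_, hstable⟩⟩
  have hZ0 : 0 ∈ Z ↔ M ∉ Y := by simp [Z, extendSigns, h0, show 0 < K by omega]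
  have hZK : M ∈ Z ↔ K - 1 ∈ Z := hstable.mem_iff_mem (by omega) (by omega)
    fun i hi hMi => absurd (T.le_max' i hi) (by omega)
  rw [hZ0, ← hZK, hagree M (T.max'_mem hne)]
  tauto

lemma eq_of_twistedChanges_subset (hT : T ⊆ range K) (hne : T.Nonempty)
    (hZ : Z ⊆ range K) (hZ' : Z' ⊆ range K) (hagree : ∀ i ∈ T, (i ∈ Z ↔ i ∈ Z'))
    (h : twistedChanges K Z ⊆ T) (h' : twistedChanges K Z' ⊆ T) : Z = Z' := by
  set M := T.max' hne
  have hMK : M < K := mem_range.mp (hT (T.max'_mem hne))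
  obtain ⟨hwrap, hstable⟩ := (twistedChanges_subset_iff (by omega)).mp h
  obtain ⟨hwrap', hstable'⟩ := (twistedChanges_subset_iff (by omega)).mp h'
  have hlast : K - 1 ∈ Z ↔ K - 1 ∈ Z' :=
    hstable.mem_iff_of_mem_iff hstable' hagree (hagree M (T.max'_mem hne)) (by omega) (by omega)
  have hfirst : 0 ∈ Z ↔ 0 ∈ Z' := by
    by_cases h0 : 0 ∈ T
    · exact hagree 0 h0
    · have := hwrap h0; have := hwrap' h0; tauto
  ext j
  by_cases hj : j < K
  · exact hstable.mem_iff_of_mem_iff hstable' hagree hfirst (Nat.zero_le j) hj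
  · exact iff_of_false (fun hc => hj (mem_range.mp (hZ hc))) fun hc => hj (mem_range.mp (hZ' hc))

lemma isSignPartition_twistedChanges (hK : 0 < K) : IsSignPartition 1 K (twistedChanges K) where
  subset_range _ _ := filter_subset _ _
  le_card Z _ := card_pos.mpr (twistedChanges_nonempty hK Z)
  existsUnique T hT hm Y := by
    have hne : T.Nonempty := card_pos.mp hm
    obtain ⟨Z, hZ, hagree, hsub⟩ := exists_twistedChanges_subset hT hne Y
    refine ⟨Z, ⟨hZ, hagree, hsub⟩, fun Z' ⟨hZ', hagree', hsub'⟩ => ?_⟩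
    exact eq_of_twistedChanges_subset hT hne hZ' hZ
      (fun i hi => (hagree' i hi).trans (hagree i hi).symm) hsub' hsub

end TwistedChanges

section CrossJoin

variable (N : ℕ) (Kf : Finset ℕ → ℕ)

/-- Each `σ ∈ B` joined with the faces having at least `m` vertices of the boundary of the
`Kf σ`-dimensional cross-polytope on fresh vertices `≥ N`. -/
def crossJoin (m : ℕ) (B : Finset (Finset ℕ)) : Finset (Finset ℕ) :=
  B.biUnion fun σ => ((range (Kf σ)).powerset.filter (m ≤ ·.card)).biUnion fun T =>
    T.powerset.image (σ ∪ crossFace N T ·)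

def crossJoinPartition (β : ℕ → Finset ℕ → Finset ℕ) (m : ℕ) (B : Finset (Finset ℕ)) :
    Finset (Finset ℕ × Finset ℕ) :=
  (B.filter (m ≤ Kf ·)).biUnion fun σ => (range (Kf σ)).powerset.image fun Z =>
    (σ ∪ crossFace N (β (Kf σ) Z) Z, σ ∪ crossFace N (range (Kf σ)) Z)

variable {N Kf} {β : ℕ → Finset ℕ → Finset ℕ} {m : ℕ} {B : Finset (Finset ℕ)}

lemma mem_crossJoin {e : Finset ℕ} :
    e ∈ crossJoin N Kf m B ↔
      ∃ σ ∈ B, ∃ T ⊆ range (Kf σ), m ≤ T.card ∧ ∃ Y, e = σ ∪ crossFace N T Y := by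
  simp only [crossJoin, mem_biUnion, mem_filter, mem_powerset, mem_image]
  constructor
  · rintro ⟨σ, hσ, T, ⟨hT, hm⟩, Y, -, rfl⟩
    exact ⟨σ, hσ, T, hT, hm, Y, rfl⟩
  · rintro ⟨σ, hσ, T, hT, hm, Y, rfl⟩
    exact ⟨σ, hσ, T, ⟨hT, hm⟩, Y ∩ T, inter_subset_right,
      by rw [crossFace_congr (Y := Y ∩ T) (Y' := Y) fun i hi => by simp [hi]]⟩

lemma mem_crossJoinPartition {p : Finset ℕ × Finset ℕ} :
    p ∈ crossJoinPartition N Kf β m B ↔ ∃ σ ∈ B, m ≤ Kf σ ∧ ∃ Z ⊆ range (Kf σ),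
      p = (σ ∪ crossFace N (β (Kf σ) Z) Z, σ ∪ crossFace N (range (Kf σ)) Z) := by
  simp only [crossJoinPartition, mem_biUnion, mem_filter, mem_powerset, mem_image]
  constructor
  · rintro ⟨σ, ⟨hσ, hm⟩, Z, hZ, rfl⟩
    exact ⟨σ, hσ, hm, Z, hZ, rfl⟩
  · rintro ⟨σ, hσ, hm, Z, hZ, rfl⟩
    exact ⟨σ, ⟨hσ, hm⟩, Z, hZ, rfl⟩

lemma subset_crossJoin : B ⊆ crossJoin N Kf 0 B := fun σ hσ =>
  mem_crossJoin.mpr ⟨σ, hσ, ∅, empty_subset _, le_rfl, ∅, by simp [crossFace]⟩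

lemma isComplex_crossJoin (hB : IsComplex B) (hlow : ∀ σ ∈ B, ∀ v ∈ σ, v < N)
    (hKf : ∀ σ ∈ B, ∀ τ ⊆ σ, Kf σ ≤ Kf τ) : IsComplex (crossJoin N Kf 0 B) := by
  intro e he τ hτ
  obtain ⟨σ, hσ, T, hT, -, Y, rfl⟩ := mem_crossJoin.mp he
  obtain ⟨ρ, hρ, T', hT', rfl⟩ := exists_eq_union_crossFace_of_subset (hlow σ hσ) hτ
  exact mem_crossJoin.mpr ⟨ρ, hB σ hσ ρ hρ, T',
    hT'.trans (hT.trans (range_subset_range.mpr (hKf σ hσ ρ hρ))), Nat.zero_le _, Y, rfl⟩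

lemma exists_card_le_of_mem_crossJoin (hlow : ∀ σ ∈ B, ∀ v ∈ σ, v < N) {e τ : Finset ℕ}
    (he : e ∈ crossJoin N Kf m B) (hτ : ∀ v ∈ τ, v < N) (hτe : τ ⊆ e) :
    ∃ σ ∈ B, τ ⊆ σ ∧ e.card ≤ σ.card + Kf σ := by
  obtain ⟨σ, hσ, T, hT, -, Y, rfl⟩ := mem_crossJoin.mp he
  refine ⟨σ, hσ, fun v hv => (mem_union.mp (hτe hv)).resolve_right fun h => ?_, ?_⟩
  · have := le_of_mem_crossFace h; have := hτ v hv; omega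
  · rw [card_union_crossFace (hlow σ hσ)]
    have := card_le_card hT
    rw [card_range] at this
    omega

lemma crossJoin_zero_sdiff (hlow : ∀ σ ∈ B, ∀ v ∈ σ, v < N) :
    crossJoin N Kf 0 B \ B = crossJoin N Kf 1 B := by
  ext e
  simp only [mem_sdiff, mem_crossJoin]
  constructor
  · rintro ⟨⟨σ, hσ, T, hT, -, Y, rfl⟩, hnot⟩
    refine ⟨σ, hσ, T, hT, Nat.one_le_iff_ne_zero.mpr fun hT0 => hnot ?_, Y, rfl⟩
    simpa [card_eq_zero.mp hT0, crossFace] using hσ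
  · rintro ⟨σ, hσ, T, hT, hm, Y, rfl⟩
    refine ⟨⟨σ, hσ, T, hT, Nat.zero_le _, Y, rfl⟩, fun he => ?_⟩
    obtain ⟨i, hi⟩ := card_pos.mp hm
    have := hlow _ he _ (mem_union_right σ (mem_crossFace.mpr ⟨i, hi, rfl⟩))
    omega

lemma maxFace_crossJoin (hlow : ∀ σ ∈ B, ∀ v ∈ σ, v < N)
    (hsize : ∀ σ ∈ B, ∀ τ ∈ B, σ ⊆ τ → τ.card + Kf τ ≤ σ.card + Kf σ)
    {σ : Finset ℕ} (hσ : σ ∈ B) (hm : m ≤ Kf σ) (Z : Finset ℕ) :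
    MaxFace (crossJoin N Kf m B) (σ ∪ crossFace N (range (Kf σ)) Z) := by
  refine ⟨mem_crossJoin.mpr ⟨σ, hσ, _, subset_rfl, by rwa [card_range], Z, rfl⟩,
    fun e he hsub => eq_of_subset_of_card_le hsub ?_⟩
  obtain ⟨σ', hσ', T, hT, -, Y, rfl⟩ := mem_crossJoin.mp he
  have hσσ' := ((union_crossFace_subset_iff (hlow σ hσ) (hlow σ' hσ')).mp hsub).1
  have hT' := card_le_card hT
  rw [card_range] at hT'
  rw [card_union_crossFace (hlow σ' hσ'), card_union_crossFace (hlow σ hσ), card_range]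
  have := hsize σ hσ σ' hσ' hσσ'
  omega

lemma maxFace_crossJoin_iff (hlow : ∀ σ ∈ B, ∀ v ∈ σ, v < N)
    (hsize : ∀ σ ∈ B, ∀ τ ∈ B, σ ⊆ τ → τ.card + Kf τ ≤ σ.card + Kf σ) {F : Finset ℕ} :
    MaxFace (crossJoin N Kf m B) F ↔
      ∃ σ ∈ B, m ≤ Kf σ ∧ ∃ Z, F = σ ∪ crossFace N (range (Kf σ)) Z := by
  refine ⟨fun ⟨hF, hmax⟩ => ?_,
    fun ⟨σ, hσ, hm, Z, hFZ⟩ => hFZ ▸ maxFace_crossJoin hlow hsize hσ hm Z⟩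
  obtain ⟨σ, hσ, T, hT, hmT, Y, rfl⟩ := mem_crossJoin.mp hF
  have hm : m ≤ Kf σ := hmT.trans (by simpa using card_le_card hT)
  exact ⟨σ, hσ, hm, Y, hmax _ (maxFace_crossJoin hlow hsize hσ hm Y).1
    (union_subset_union_right (crossFace_subset_crossFace_iff.mpr ⟨hT, fun _ _ => Iff.rfl⟩))⟩

lemma union_crossFace_mem_interval_iff {σ σ' A C T Y Z : Finset ℕ}
    (hσ : ∀ v ∈ σ, v < N) (hσ' : ∀ v ∈ σ', v < N) :
    (σ' ∪ crossFace N A Z ⊆ σ ∪ crossFace N T Y ∧ σ ∪ crossFace N T Y ⊆ σ' ∪ crossFace N C Z) ↔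
      σ' = σ ∧ A ⊆ T ∧ T ⊆ C ∧ ∀ i ∈ T, (i ∈ Y ↔ i ∈ Z) := by
  rw [union_crossFace_subset_iff hσ' hσ, union_crossFace_subset_iff hσ hσ',
    crossFace_subset_crossFace_iff, crossFace_subset_crossFace_iff]
  constructor
  · rintro ⟨⟨h1, h2, -⟩, h3, h4, h5⟩
    exact ⟨subset_antisymm h1 h3, h2, h4, h5⟩
  · rintro ⟨rfl, h2, h4, h5⟩
    exact ⟨⟨subset_rfl, h2, fun i hi => (h5 i (h2 hi)).symm⟩, subset_rfl, h4, h5⟩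

theorem isPartitioning_crossJoinPartition (hlow : ∀ σ ∈ B, ∀ v ∈ σ, v < N)
    (hsize : ∀ σ ∈ B, ∀ τ ∈ B, σ ⊆ τ → τ.card + Kf τ ≤ σ.card + Kf σ)
    (hβ : ∀ K, m ≤ K → IsSignPartition m K (β K)) :
    IsPartitioning (crossJoinPartition N Kf β m B) (crossJoin N Kf m B) := by
  refine ⟨fun p hp => ?_, fun p hp e hbot htop => ?_, fun e he => ?_⟩
  · obtain ⟨σ, hσ, hm, Z, hZ, rfl⟩ := mem_crossJoinPartition.mp hp
    obtain ⟨hF, hmax⟩ := maxFace_crossJoin hlow hsize hσ hm Z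
    exact ⟨union_subset_union_right (crossFace_subset_crossFace_iff.mpr
      ⟨(hβ _ hm).subset_range Z hZ, fun _ _ => Iff.rfl⟩), hF, hmax⟩
  · obtain ⟨σ, hσ, hm, Z, hZ, rfl⟩ := mem_crossJoinPartition.mp hp
    obtain ⟨ρ, hρ, T, hT, rfl⟩ := exists_eq_union_crossFace_of_subset (hlow σ hσ) htop
    obtain ⟨rfl, hβT, -⟩ := (union_crossFace_mem_interval_iff
      (fun v hv => hlow σ hσ v (hρ hv)) (hlow σ hσ)).mp ⟨hbot, htop⟩
    exact mem_crossJoin.mpr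
      ⟨_, hσ, T, hT, ((hβ _ hm).le_card Z hZ).trans (card_le_card hβT), Z, rfl⟩
  · obtain ⟨σ, hσ, T, hT, hmT, Y, rfl⟩ := mem_crossJoin.mp he
    have hm : m ≤ Kf σ := hmT.trans (by simpa using card_le_card hT)
    obtain ⟨Z, ⟨hZ, hagree, hβT⟩, huniq⟩ := (hβ _ hm).existsUnique T hT hmT Y
    refine ⟨_, ⟨mem_crossJoinPartition.mpr ⟨σ, hσ, hm, Z, hZ, rfl⟩,
      (union_crossFace_mem_interval_iff (hlow σ hσ) (hlow σ hσ)).mpr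
        ⟨rfl, hβT, hT, fun i hi => (hagree i hi).symm⟩⟩, ?_⟩
    rintro q ⟨hq, hqe⟩
    obtain ⟨σ', hσ', -, Z', hZ', rfl⟩ := mem_crossJoinPartition.mp hq
    obtain ⟨rfl, hβT', -, hagree'⟩ :=
      (union_crossFace_mem_interval_iff (hlow σ hσ) (hlow σ' hσ')).mp hqe
    rw [huniq Z' ⟨hZ', fun i hi => (hagree' i hi).symm, hβT'⟩]

lemma genGE_crossJoin (hlow : ∀ σ ∈ B, ∀ v ∈ σ, v < N)
    (hsize : ∀ σ ∈ B, ∀ τ ∈ B, σ ⊆ τ → τ.card + Kf τ ≤ σ.card + Kf σ) (r : ℕ) :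
    genGE (crossJoin N Kf m B) r = crossJoin N Kf m (B.filter fun σ => r + 1 ≤ σ.card + Kf σ) := by
  ext e
  simp only [genGE, mem_filter]
  constructor
  · rintro ⟨he, F, hF, hrF, heF⟩
    obtain ⟨σ, hσ, T, hT, hm, Y, rfl⟩ := mem_crossJoin.mp he
    obtain ⟨σ', hσ', -, Z, rfl⟩ := (maxFace_crossJoin_iff hlow hsize).mp hF
    have hσσ' := ((union_crossFace_subset_iff (hlow σ hσ) (hlow σ' hσ')).mp heF).1
    rw [card_union_crossFace (hlow σ' hσ'), card_range] at hrF
    exact mem_crossJoin.mpr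
      ⟨σ, mem_filter.mpr ⟨hσ, hrF.trans (hsize σ hσ σ' hσ' hσσ')⟩, T, hT, hm, Y, rfl⟩
  · intro he
    obtain ⟨σ, hσr, T, hT, hm, Y, rfl⟩ := mem_crossJoin.mp he
    obtain ⟨hσ, hr⟩ := mem_filter.mp hσr
    refine ⟨mem_crossJoin.mpr ⟨σ, hσ, T, hT, hm, Y, rfl⟩, _,
      maxFace_crossJoin hlow hsize hσ (hm.trans (by simpa using card_le_card hT)) Y,
      by rwa [card_union_crossFace (hlow σ hσ), card_range],
      union_subset_union_right (crossFace_subset_crossFace_iff.mpr ⟨hT, fun _ _ => Iff.rfl⟩)⟩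

lemma filter_crossJoinPartition (hlow : ∀ σ ∈ B, ∀ v ∈ σ, v < N) (r : ℕ) :
    (crossJoinPartition N Kf β m B).filter (fun p => r + 1 ≤ p.2.card) =
      crossJoinPartition N Kf β m (B.filter fun σ => r + 1 ≤ σ.card + Kf σ) := by
  ext p
  simp only [mem_filter, mem_crossJoinPartition]
  constructor
  · rintro ⟨⟨σ, hσ, hm, Z, hZ, rfl⟩, hr⟩
    rw [card_union_crossFace (hlow σ hσ), card_range] at hr
    exact ⟨σ, ⟨hσ, hr⟩, hm, Z, hZ, rfl⟩
  · rintro ⟨σ, ⟨hσ, hr⟩, hm, Z, hZ, rfl⟩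
    refine ⟨⟨σ, hσ, hm, Z, hZ, rfl⟩, ?_⟩
    rwa [card_union_crossFace (hlow σ hσ), card_range]

theorem layerCompatible_crossJoinPartition (hlow : ∀ σ ∈ B, ∀ v ∈ σ, v < N)
    (hsize : ∀ σ ∈ B, ∀ τ ∈ B, σ ⊆ τ → τ.card + Kf τ ≤ σ.card + Kf σ)
    (hβ : ∀ K, m ≤ K → IsSignPartition m K (β K)) :
    LayerCompatible (crossJoinPartition N Kf β m B) (crossJoin N Kf m B) := by
  refine ⟨isPartitioning_crossJoinPartition hlow hsize hβ, fun r => ?_⟩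
  rw [filter_crossJoinPartition hlow, genGE_crossJoin hlow hsize]
  exact isPartitioning_crossJoinPartition (fun σ hσ => hlow σ (mem_filter.mp hσ).1)
    (fun σ hσ τ hτ => hsize σ (mem_filter.mp hσ).1 τ (mem_filter.mp hτ).1) hβ

end CrossJoin

section Extension

variable {Δ : Finset (Finset ℕ)} {σ τ e : Finset ℕ}

def vertexBound (Δ : Finset (Finset ℕ)) : ℕ := Δ.sup (·.sup id) + 1

def defect (Δ : Finset (Finset ℕ)) (σ : Finset ℕ) : ℕ := dcard Δ σ - σ.card

lemma lt_vertexBound (hσ : σ ∈ Δ) {v : ℕ} (hv : v ∈ σ) : v < vertexBound Δ :=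
  Nat.lt_succ_of_le ((le_sup (f := id) hv).trans (le_sup (f := (·.sup id)) hσ))

lemma card_le_dcard (hσ : σ ∈ Δ) : σ.card ≤ dcard Δ σ :=
  le_sup (f := card) (mem_filter.mpr ⟨hσ, subset_rfl⟩)

lemma dcard_anti (h : σ ⊆ τ) : dcard Δ τ ≤ dcard Δ σ :=
  sup_mono fun _ he => mem_filter.mpr ⟨(mem_filter.mp he).1, h.trans (mem_filter.mp he).2⟩

lemma dcard_mono {Γ : Finset (Finset ℕ)} (h : Δ ⊆ Γ) : dcard Δ σ ≤ dcard Γ σ :=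
  sup_mono (filter_subset_filter _ h)

lemma dcard_empty : dcard Δ ∅ = Δ.sup card := by
  simp [dcard]

lemma card_add_defect (hσ : σ ∈ Δ) : σ.card + defect Δ σ = dcard Δ σ := by
  have := card_le_dcard hσ
  unfold defect
  omega

lemma defect_anti (h : τ ⊆ σ) : defect Δ σ ≤ defect Δ τ := by
  have := card_le_card h
  have := dcard_anti (Δ := Δ) h
  unfold defect
  omega

lemma card_le_dcard_of_mem_crossJoin {m : ℕ}
    (he : e ∈ crossJoin (vertexBound Δ) (defect Δ) m Δ) (hτe : τ ⊆ e)
    (hτ : ∀ v ∈ τ, v < vertexBound Δ) : e.card ≤ dcard Δ τ := by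
  obtain ⟨σ, hσ, hτσ, hcard⟩ :=
    exists_card_le_of_mem_crossJoin (fun _ hσ _ hv => lt_vertexBound hσ hv) he hτ hτe
  rw [card_add_defect hσ] at hcard
  exact hcard.trans (dcard_anti hτσ)

end Extension

end PartitionExtender

open Finset PartitionExtender in
/-- Every (possibly nonpure) simplicial complex `Δ` admits a complex `Γ ⊇ Δ` with
`dim Γ = dim Δ` and `d_Δ(σ) = d_Γ(σ)` for all faces `σ ∈ Δ`, such that both `Γ` and the
relative complex `(Γ,Δ)` admit layer-compatible partitionings of their face posets. -/
theorem exists_layer_compatible_partition_extender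
    (Δ : Finset (Finset ℕ)) (hΔ : IsComplex Δ) :
    ∃ Γ : Finset (Finset ℕ), IsComplex Γ ∧ Δ ⊆ Γ ∧
      Γ.sup Finset.card = Δ.sup Finset.card ∧
      (∀ σ ∈ Δ, dcard Δ σ = dcard Γ σ) ∧
      (∃ S, LayerCompatible S Γ) ∧
      (∃ T, LayerCompatible T (Γ \ Δ)) := by
  have hlow : ∀ σ ∈ Δ, ∀ v ∈ σ, v < vertexBound Δ := fun _ hσ _ hv => lt_vertexBound hσ hv
  have hsize : ∀ σ ∈ Δ, ∀ τ ∈ Δ, σ ⊆ τ → τ.card + defect Δ τ ≤ σ.card + defect Δ σ :=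
    fun σ hσ τ hτ h => by rw [card_add_defect hσ, card_add_defect hτ]; exact dcard_anti h
  set Γ := crossJoin (vertexBound Δ) (defect Δ) 0 Δ
  have hdim : Γ.sup card = Δ.sup card := by
    refine le_antisymm (Finset.sup_le fun e he => ?_) (Finset.sup_mono subset_crossJoin)
    exact dcard_empty (Δ := Δ) ▸ card_le_dcard_of_mem_crossJoin he (empty_subset e) (by simp)
  have hdcard : ∀ σ ∈ Δ, dcard Δ σ = dcard Γ σ := fun σ hσ =>
    le_antisymm (dcard_mono subset_crossJoin) (Finset.sup_le fun e he =>
      card_le_dcard_of_mem_crossJoin (mem_filter.mp he).1 (mem_filter.mp he).2 (hlow σ hσ))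
  have hrel : LayerCompatible (crossJoinPartition (vertexBound Δ) (defect Δ) twistedChanges 1 Δ)
      (Γ \ Δ) := by
    rw [crossJoin_zero_sdiff hlow]
    exact layerCompatible_crossJoinPartition hlow hsize fun _ hK => isSignPartition_twistedChanges hK
  exact ⟨Γ, isComplex_crossJoin hΔ hlow fun _ _ _ h => defect_anti h, subset_crossJoin, hdim,
    hdcard, ⟨_, layerCompatible_crossJoinPartition hlow hsize fun K _ => isSignPartition_id K⟩,
    ⟨_, hrel⟩⟩
end

section
/- Let Δ be a (possibly nonpure) simplicial complex and let Γ ⊇ Δ be a complex with dim(Γ) = dim(Δ), d_Δ(σ) = d_Γ(σ) for all σ ∈ Δ, such that Γ and (Γ,Δ) admit h-compatible partitionings. Then for all i,j, h_{i,j}(Δ) equals the number of (i,j)-intervals in an h-compatible partitioning of Γ minus the number of (i,j)-intervals in an h-compatible partitioning of (Γ,Δ). -/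
/-- An `h`-compatible partitioning of the (relative) complex with face set `P` inside
the ambient complex `amb`: a partitioning such that for all `i, j` the number of
`(i,j)`-intervals (Boolean intervals whose bottom element has cardinality `j` and whose
top element is a facet of cardinality `i`) equals `h_{i,j}`. -/
def HCompatible (S : Finset (Finset ℕ × Finset ℕ)) (amb P : Finset (Finset ℕ)) : Prop :=
  IsPartitioning S P ∧
    ∀ i j : ℕ,
      ((S.filter (fun p => p.2.card = i ∧ p.1.card = j)).card : ℤ) = htri amb P i j


/-! Faces of `Δ` have the same `d` in `Δ` as in `Γ`, so the `f`-triangle of `Γ` is the sum of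
those of `Δ` and `(Γ,Δ)`; the `h`-triangle is linear in the `f`-triangle, and `h`-compatibility
turns the `h`-triangles of `Γ` and `(Γ,Δ)` into interval counts. -/

lemma ftri_add_ftri_sdiff {amb P Q : Finset (Finset ℕ)} (hQP : Q ⊆ P) (i j : ℕ) :
    ftri amb Q i j + ftri amb (P \ Q) i j = ftri amb P i j := by
  unfold ftri
  rw [← Finset.card_union_of_disjoint (Finset.disjoint_filter_filter Finset.disjoint_sdiff),
    ← Finset.filter_union, Finset.union_sdiff_of_subset hQP]

lemma ftri_congr_of_dcard_eq {A B P : Finset (Finset ℕ)} (h : ∀ σ ∈ P, dcard A σ = dcard B σ)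
    (i j : ℕ) : ftri A P i j = ftri B P i j := by
  unfold ftri
  congr 1
  exact Finset.filter_congr fun σ hσ => by rw [h σ hσ]

lemma htri_add_of_ftri_add {A B C P Q R : Finset (Finset ℕ)} {i : ℕ}
    (h : ∀ m, ftri A P i m + ftri B Q i m = ftri C R i m) (j : ℕ) :
    htri A P i j + htri B Q i j = htri C R i j := by
  simp only [htri, ← Finset.sum_add_distrib, ← h]
  refine Finset.sum_congr rfl fun m _ => ?_
  push_cast
  ring

theorem h_triangle_from_h_compatible_partitionings_general (Γ Δ : Finset (Finset ℕ))
    (hsub : Δ ⊆ Γ)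
    (hd : ∀ σ ∈ Δ, dcard Δ σ = dcard Γ σ)
    (S T : Finset (Finset ℕ × Finset ℕ))
    (hS : HCompatible S Γ Γ) (hT : HCompatible T Γ (Γ \ Δ)) :
    ∀ i j : ℕ,
      htri Δ Δ i j =
        ((S.filter (fun p => p.2.card = i ∧ p.1.card = j)).card : ℤ) -
          ((T.filter (fun p => p.2.card = i ∧ p.1.card = j)).card : ℤ) := by
  intro i j
  have hadd : htri Δ Δ i j + htri Γ (Γ \ Δ) i j = htri Γ Γ i j :=
    htri_add_of_ftri_add (fun m => by
      rw [ftri_congr_of_dcard_eq hd, ftri_add_ftri_sdiff hsub]) j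
  rw [hS.2 i j, hT.2 i j]
  linarith

/-- If `Δ ⊆ Γ` are (possibly nonpure) complexes with `dim Γ = dim Δ` and
`d_Δ(σ) = d_Γ(σ)` for all `σ ∈ Δ`, and `Γ` and `(Γ,Δ)` admit `h`-compatible
partitionings `S` and `T`, then `h_{i,j}(Δ)` equals the number of `(i,j)`-intervals of
`S` minus the number of `(i,j)`-intervals of `T`. -/
theorem h_triangle_from_h_compatible_partitionings (Γ Δ : Finset (Finset ℕ))
    (hΓ : IsComplex Γ) (hΔ : IsComplex Δ) (hsub : Δ ⊆ Γ)
    (hdim : Γ.sup Finset.card = Δ.sup Finset.card)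
    (hd : ∀ σ ∈ Δ, dcard Δ σ = dcard Γ σ)
    (S T : Finset (Finset ℕ × Finset ℕ))
    (hS : HCompatible S Γ Γ) (hT : HCompatible T Γ (Γ \ Δ)) :
    ∀ i j : ℕ,
      htri Δ Δ i j =
        ((S.filter (fun p => p.2.card = i ∧ p.1.card = j)).card : ℤ) -
          ((T.filter (fun p => p.2.card = i ∧ p.1.card = j)).card : ℤ) :=
  h_triangle_from_h_compatible_partitionings_general Γ Δ hsub hd S T hS hT
end

section
/- Let k be a field and let Δ be a simplicial complex with depth k[Δ] < dim k[Δ] − 1. Then Δ has no Cohen–Macaulay extender: for every d-dimensional (d = dim Δ) Cohen–Macaulay complex Γ containing Δ, the relative complex (Γ,Δ) is not relative Cohen–Macaulay. Equivalently, if there exist a face σ ∈ Δ and an index i with H̃_i(lk_Δ(σ); k) ≠ 0 and |σ| + i + 1 ≤ d − 1, then for any d-dimensional Cohen–Macaulay Γ ⊇ Δ, the relative homology H̃_{i+1}(lk_Γ(σ), lk_Δ(σ); k) is nonzero with |σ| + (i+1) < d. -/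
/-- The link of the face `σ` in `Δ`:  `{τ ∈ Δ : σ ∪ τ ∈ Δ, σ ∩ τ = ∅}`. -/
def lkF (Δ : Finset (Finset ℕ)) (σ : Finset ℕ) : Finset (Finset ℕ) :=
  Δ.filter (fun τ => σ ∪ τ ∈ Δ ∧ σ ∩ τ = ∅)

/-- The space of simplicial `k`-chains of cardinality `c` supported on the set of faces
`Q`: the free `k`-vector space on the faces of `Q` of cardinality `c`.  (Taking `Q = Δ`,
with `∅ ∈ Δ`, gives the augmented chain complex computing reduced homology; taking
`Q = Γ \ Δ` gives the relative chain complex of the pair `(Γ, Δ)`.) -/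
abbrev Chains (k : Type) [Field k] (Q : Finset (Finset ℕ)) (c : ℤ) : Type :=
  {σ : Finset ℕ // σ ∈ Q ∧ (σ.card : ℤ) = c} → k

/-- The simplicial boundary operator from chains of cardinality `c + 1` to chains of
cardinality `c`, given on basis elements by `∂σ = ∑_{v ∈ σ} (-1)^{|{w ∈ σ : w < v}|} (σ∖v)`
(discarding any `σ∖v ∉ Q`); here expressed on coordinates. -/
def bdryFun (k : Type) [Field k] (Q : Finset (Finset ℕ)) (c : ℤ)
    (f : Chains k Q (c + 1)) : Chains k Q c := fun τ =>
  ∑ v ∈ (Q.sup id) \ τ.1,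
    if h : insert v τ.1 ∈ Q ∧ ((insert v τ.1).card : ℤ) = c + 1 then
      (-1 : k) ^ (τ.1.filter (· < v)).card * f ⟨insert v τ.1, h⟩
    else 0

/-- The boundary operator as a linear map. -/
def bdry (k : Type) [Field k] (Q : Finset (Finset ℕ)) (c : ℤ) :
    Chains k Q (c + 1) →ₗ[k] Chains k Q c where
  toFun := bdryFun k Q c
  map_add' f g := by
    funext τ
    simp only [bdryFun, Pi.add_apply]
    rw [← Finset.sum_add_distrib]
    refine Finset.sum_congr rfl fun v hv => ?_
    split
    · rw [mul_add]
    · rw [add_zero]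
  map_smul' a f := by
    funext τ
    simp only [bdryFun, Pi.smul_apply, smul_eq_mul, RingHom.id_apply, Finset.mul_sum]
    refine Finset.sum_congr rfl fun v hv => ?_
    split
    · ring
    · rw [mul_zero]

/-- The reduced simplicial homology in dimension `n` with coefficients in the field `k`
of the (relative) complex whose set of faces is `Q`:  cycles of cardinality `n + 1`
modulo boundaries.  For `Q = Δ` a complex (which contains the empty face `∅` whenever it
is nonempty) this is the reduced homology `H̃_n(Δ; k)`; for `Q = Γ \ Δ` it is the
relative homology `H̃_n(Γ, Δ; k)`. -/
abbrev redH (k : Type) [Field k] (Q : Finset (Finset ℕ)) (n : ℤ) : Type :=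
  LinearMap.ker (bdry k Q n) ⧸
    (LinearMap.range (bdry k Q (n + 1))).comap (LinearMap.ker (bdry k Q n)).subtype

/-- The `d`-dimensional complex `Γ` is Cohen–Macaulay over `k`: for every face
`σ ∈ Γ`, the reduced homology `H̃_i(lk_Γ(σ); k)` vanishes for all
`i ≠ d - dim σ - 1 = d - |σ|`. -/
def IsCM (k : Type) [Field k] (Γ : Finset (Finset ℕ)) (d : ℤ) : Prop :=
  ∀ σ ∈ Γ, ∀ i : ℤ, i ≠ d - (σ.card : ℤ) → Subsingleton (redH k (lkF Γ σ) i)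

/-- The relative complex `(Γ, Δ)`, with `dim Γ = d`, is relative Cohen–Macaulay over
`k`: for every face `σ` of `Γ`, the relative homology
`H̃_i(lk_Γ(σ), lk_Δ(σ); k)` vanishes except possibly when `|σ| + i = d`. -/
def RelCM (k : Type) [Field k] (Γ Δ : Finset (Finset ℕ)) (d : ℤ) : Prop :=
  ∀ σ ∈ Γ, ∀ i : ℤ, (σ.card : ℤ) + i ≠ d →
    Subsingleton (redH k (lkF Γ σ \ lkF Δ σ) i)

/-- `depth k[Δ] ≥ h`, via Hochster's formula (Reisner's criterion for depth):
`H̃_i(lk_Δ(σ); k) = 0` whenever `|σ| + i + 1 < h`. -/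
def DepthGE (k : Type) [Field k] (Δ : Finset (Finset ℕ)) (h : ℤ) : Prop :=
  ∀ σ ∈ Δ, ∀ i : ℤ, (σ.card : ℤ) + i + 1 < h → Subsingleton (redH k (lkF Δ σ) i)

namespace Chains

variable {k : Type} [Field k] {Q Q' : Finset (Finset ℕ)} {c : ℤ}

def coeff (f : Chains k Q c) (σ : Finset ℕ) : k :=
  if h : σ ∈ Q ∧ (σ.card : ℤ) = c then f ⟨σ, h⟩ else 0

/-- A chain on `Q` read as a chain on `Q'`: restriction and extension by zero at once. -/
def transfer (Q' : Finset (Finset ℕ)) : Chains k Q c →ₗ[k] Chains k Q' c where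
  toFun f τ := coeff f τ.1
  map_add' f g := by
    funext τ
    simp only [coeff, Pi.add_apply]
    split_ifs <;> simp
  map_smul' a f := by
    funext τ
    simp only [coeff, Pi.smul_apply, smul_eq_mul, RingHom.id_apply]
    split_ifs <;> simp

theorem transfer_apply (f : Chains k Q c) (τ : {σ : Finset ℕ // σ ∈ Q' ∧ (σ.card : ℤ) = c}) :
    transfer Q' f τ = coeff f τ.1 :=
  rfl

theorem coeff_val (f : Chains k Q c) (τ : {σ : Finset ℕ // σ ∈ Q ∧ (σ.card : ℤ) = c}) :
    coeff f τ.1 = f τ :=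
  dif_pos τ.2

theorem coeff_eq_zero_of_notMem (f : Chains k Q c) {σ : Finset ℕ} (hσ : σ ∉ Q) :
    coeff f σ = 0 :=
  dif_neg fun h => hσ h.1

theorem coeff_eq_zero_of_card_ne (f : Chains k Q c) {σ : Finset ℕ} (hσ : (σ.card : ℤ) ≠ c) :
    coeff f σ = 0 :=
  dif_neg fun h => hσ h.2

theorem coeff_transfer (f : Chains k Q c) (σ : Finset ℕ) [Decidable (σ ∈ Q')] :
    coeff (transfer Q' f) σ = if σ ∈ Q' then coeff f σ else 0 := by
  by_cases hσ : σ ∈ Q'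
  · by_cases hc : (σ.card : ℤ) = c
    · rw [if_pos hσ, coeff, dif_pos ⟨hσ, hc⟩, transfer_apply]
    · rw [coeff_eq_zero_of_card_ne _ hc, coeff_eq_zero_of_card_ne _ hc, ite_self]
  · rw [if_neg hσ, coeff_eq_zero_of_notMem _ hσ]

theorem transfer_transfer_apply (f : Chains k Q c)
    (τ : {σ : Finset ℕ // σ ∈ Q ∧ (σ.card : ℤ) = c}) [Decidable (τ.1 ∈ Q')] :
    transfer Q (transfer Q' f) τ = if τ.1 ∈ Q' then f τ else 0 := by
  rw [transfer_apply, coeff_transfer, coeff_val]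

theorem transfer_transfer_of_subset (h : Q ⊆ Q') (f : Chains k Q c) :
    transfer Q (transfer Q' f) = f := by
  classical
  funext τ
  rw [transfer_transfer_apply, if_pos (h τ.2.1)]

theorem transfer_injective (h : Q ⊆ Q') :
    Function.Injective (transfer Q' : Chains k Q c → Chains k Q' c) :=
  Function.LeftInverse.injective (transfer_transfer_of_subset h)

theorem transfer_transfer_of_support_subset (f : Chains k Q c)
    (hf : ∀ τ : {σ : Finset ℕ // σ ∈ Q ∧ (σ.card : ℤ) = c}, τ.1 ∉ Q' → f τ = 0) :
    transfer Q (transfer Q' f) = f := by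
  classical
  funext τ
  rw [transfer_transfer_apply]
  split_ifs with hτ
  · rfl
  · exact (hf τ hτ).symm

end Chains

open Chains

section

variable {k : Type} [Field k] {Q Q' : Finset (Finset ℕ)} {c : ℤ}

/-- The sign of the face `τ` in the boundary of `insert v τ`. -/
def bdrySign (k : Type) [Field k] (τ : Finset ℕ) (v : ℕ) : k :=
  (-1) ^ (τ.filter (· < v)).card

theorem bdrySign_insert_of_lt {τ : Finset ℕ} {v w : ℕ} (hv : v ∉ τ) (hvw : v < w) :
    bdrySign k (insert v τ) w = -bdrySign k τ w := by
  rw [bdrySign, bdrySign, Finset.filter_insert, if_pos hvw,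
    Finset.card_insert_of_notMem fun h => hv (Finset.mem_filter.mp h).1, pow_succ, mul_neg_one]

theorem bdrySign_insert_of_le {τ : Finset ℕ} {v w : ℕ} (hwv : w ≤ v) :
    bdrySign k (insert v τ) w = bdrySign k τ w := by
  rw [bdrySign, bdrySign, Finset.filter_insert, if_neg (not_lt.mpr hwv)]

theorem bdrySign_mul_bdrySign_swap {τ : Finset ℕ} {v w : ℕ} (hv : v ∉ τ) (hw : w ∉ τ)
    (hvw : v ≠ w) :
    bdrySign k τ v * bdrySign k (insert v τ) w =
      -(bdrySign k τ w * bdrySign k (insert w τ) v) := by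
  rcases hvw.lt_or_gt with h | h
  · rw [bdrySign_insert_of_lt hv h, bdrySign_insert_of_le h.le]
    ring
  · rw [bdrySign_insert_of_le h.le, bdrySign_insert_of_lt hw h]
    ring

/-- The terms with `v ∈ τ` vanish because `insert v τ = τ` has the wrong size. -/
theorem bdry_apply (f : Chains k Q (c + 1)) (τ : {σ : Finset ℕ // σ ∈ Q ∧ (σ.card : ℤ) = c})
    {S : Finset ℕ} (hS : Q.sup id ⊆ S) :
    bdry k Q c f τ = ∑ v ∈ S, bdrySign k τ.1 v * coeff f (insert v τ.1) := by
  have hterm : ∀ v, (if h : insert v τ.1 ∈ Q ∧ ((insert v τ.1).card : ℤ) = c + 1 then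
      (-1 : k) ^ (τ.1.filter (· < v)).card * f ⟨insert v τ.1, h⟩ else 0) =
      bdrySign k τ.1 v * coeff f (insert v τ.1) := fun v => by
    rw [coeff, mul_dite, mul_zero]
    rfl
  change ∑ v ∈ Q.sup id \ τ.1, _ = _
  simp only [hterm]
  refine Finset.sum_subset (Finset.sdiff_subset.trans hS) fun v _ hv => ?_
  rw [Finset.mem_sdiff, not_and_or, not_not] at hv
  rcases hv with hvQ | hvτ
  · refine mul_eq_zero_of_right _ (coeff_eq_zero_of_notMem f fun h => hvQ ?_)
    exact Finset.le_sup (f := id) h (Finset.mem_insert_self v τ.1)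
  · refine mul_eq_zero_of_right _ (coeff_eq_zero_of_card_ne f ?_)
    rw [Finset.insert_eq_of_mem hvτ, τ.2.2]
    omega

theorem coeff_bdry (hQ : IsComplex Q) (f : Chains k Q (c + 1)) {σ : Finset ℕ}
    (hσ : (σ.card : ℤ) = c) {S : Finset ℕ} (hS : Q.sup id ⊆ S) :
    coeff (bdry k Q c f) σ = ∑ w ∈ S, bdrySign k σ w * coeff f (insert w σ) := by
  by_cases hσQ : σ ∈ Q
  · rw [coeff, dif_pos ⟨hσQ, hσ⟩, bdry_apply _ _ hS]
  · rw [coeff_eq_zero_of_notMem _ hσQ]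
    refine (Finset.sum_eq_zero fun w _ => mul_eq_zero_of_right _ ?_).symm
    exact coeff_eq_zero_of_notMem f fun h => hσQ (hQ _ h _ (Finset.subset_insert w σ))

def bdryBdryTerm (f : Chains k Q (c + 1 + 1)) (τ : Finset ℕ) (v w : ℕ) : k :=
  bdrySign k τ v * bdrySign k (insert v τ) w * coeff f (insert w (insert v τ))

theorem bdryBdryTerm_self (f : Chains k Q (c + 1 + 1)) {τ : Finset ℕ}
    (hτ : (τ.card : ℤ) = c) (v : ℕ) : bdryBdryTerm f τ v v = 0 := by
  refine mul_eq_zero_of_right _ (coeff_eq_zero_of_card_ne f ?_)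
  have := Finset.card_insert_le v τ
  rw [Finset.insert_idem]
  omega

theorem bdryBdryTerm_add_swap (f : Chains k Q (c + 1 + 1)) {τ : Finset ℕ}
    (hτ : (τ.card : ℤ) = c) (v w : ℕ) :
    bdryBdryTerm f τ v w + bdryBdryTerm f τ w v = 0 := by
  rw [bdryBdryTerm, bdryBdryTerm, Finset.insert_comm w v]
  by_cases hcard : (insert v (insert w τ)).card = τ.card + 2
  · have hv : v ∉ insert w τ := fun h => by
      rw [Finset.insert_eq_of_mem h] at hcard
      have := Finset.card_insert_le w τ
      omega
    have hw : w ∉ τ := fun h => by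
      rw [Finset.insert_eq_of_mem h] at hcard
      have := Finset.card_insert_le v τ
      omega
    rw [Finset.mem_insert, not_or] at hv
    rw [bdrySign_mul_bdrySign_swap hv.2 hw hv.1]
    ring
  · rw [coeff_eq_zero_of_card_ne f (by omega), mul_zero, mul_zero, add_zero]

theorem bdry_bdry (hQ : IsComplex Q) (f : Chains k Q (c + 1 + 1)) :
    bdry k Q c (bdry k Q (c + 1) f) = 0 := by
  funext τ
  have hrow : ∀ v ∈ Q.sup id, bdrySign k τ.1 v * coeff (bdry k Q (c + 1) f) (insert v τ.1) =
      ∑ w ∈ Q.sup id, bdryBdryTerm f τ.1 v w := fun v _ => by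
    by_cases hv : v ∈ τ.1
    · simp only [bdryBdryTerm, Finset.insert_eq_of_mem hv]
      rw [coeff_eq_zero_of_card_ne _ (by omega), mul_zero]
      refine (Finset.sum_eq_zero fun w _ => mul_eq_zero_of_right _ ?_).symm
      refine coeff_eq_zero_of_card_ne f fun h => ?_
      have := Finset.card_insert_le w τ.1
      omega
    · rw [coeff_bdry hQ f (by rw [Finset.card_insert_of_notMem hv]; push_cast; omega) le_rfl,
        Finset.mul_sum]
      simp only [bdryBdryTerm, mul_assoc]
  rw [bdry_apply _ τ le_rfl, Finset.sum_congr rfl hrow, ← Finset.sum_product', Pi.zero_apply]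
  refine Finset.sum_involution (fun p _ => p.swap)
    (fun p _ => bdryBdryTerm_add_swap f τ.2.2 p.1 p.2) (fun p _ hp heq => hp ?_)
    (fun p hp => Finset.mem_product.mpr (Finset.mem_product.mp hp).symm)
    (fun p _ => p.swap_swap)
  rw [show p.2 = p.1 from congrArg Prod.fst heq]
  exact bdryBdryTerm_self f τ.2.2 p.1

theorem bdry_transfer_apply (f : Chains k Q (c + 1))
    (τ : {σ : Finset ℕ // σ ∈ Q' ∧ (σ.card : ℤ) = c}) (hτ : τ.1 ∈ Q)
    (hup : ∀ v, insert v τ.1 ∈ Q → insert v τ.1 ∈ Q') :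
    bdry k Q' c (transfer Q' f) τ = bdry k Q c f ⟨τ.1, hτ, τ.2.2⟩ := by
  classical
  rw [bdry_apply _ _ (Finset.subset_union_right (s₁ := Q.sup id)),
    bdry_apply _ _ Finset.subset_union_left]
  refine Finset.sum_congr rfl fun v _ => ?_
  rw [coeff_transfer]
  split_ifs with hv
  · rfl
  · rw [coeff_eq_zero_of_notMem f fun h => hv (hup v h)]

theorem bdry_transfer_of_subset {A B : Finset (Finset ℕ)} (hA : IsComplex A) (hAB : A ⊆ B)
    (f : Chains k A (c + 1)) :
    bdry k B c (transfer B f) = transfer B (bdry k A c f) := by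
  classical
  funext τ
  by_cases hτ : τ.1 ∈ A
  · rw [bdry_transfer_apply f τ hτ fun v h => hAB h]
    exact (coeff_val _ ⟨τ.1, hτ, τ.2.2⟩).symm
  · rw [transfer_apply, coeff_eq_zero_of_notMem _ hτ, bdry_apply _ _ le_rfl]
    refine Finset.sum_eq_zero fun v _ => mul_eq_zero_of_right _ ?_
    have hv : insert v τ.1 ∉ A := fun h => hτ (hA _ h _ (Finset.subset_insert v _))
    rw [coeff_transfer, coeff_eq_zero_of_notMem f hv, ite_self]

theorem bdry_transfer_sdiff {A B : Finset (Finset ℕ)} (hA : IsComplex A)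
    (f : Chains k B (c + 1)) :
    bdry k (B \ A) c (transfer (B \ A) f) = transfer (B \ A) (bdry k B c f) := by
  funext τ
  obtain ⟨hτB, hτA⟩ := Finset.mem_sdiff.mp τ.2.1
  rw [bdry_transfer_apply f τ hτB fun v h => Finset.mem_sdiff.mpr
    ⟨h, fun h' => hτA (hA _ h' _ (Finset.subset_insert v _))⟩]
  exact (coeff_val _ ⟨τ.1, hτB, τ.2.2⟩).symm

theorem subsingleton_redH_iff {n : ℤ} :
    Subsingleton (redH k Q n) ↔
      LinearMap.ker (bdry k Q n) ≤ LinearMap.range (bdry k Q (n + 1)) := by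
  rw [Submodule.Quotient.subsingleton_iff, Submodule.comap_subtype_eq_top]

theorem subsingleton_redH_of_sdiff {A B : Finset (Finset ℕ)} (hA : IsComplex A)
    (hB : IsComplex B) (hAB : A ⊆ B) {i : ℤ} (hBi : Subsingleton (redH k B i))
    (hBA : Subsingleton (redH k (B \ A) (i + 1))) : Subsingleton (redH k A i) := by
  rw [subsingleton_redH_iff] at hBi hBA ⊢
  intro w hw
  rw [LinearMap.mem_ker] at hw
  obtain ⟨u, hu⟩ := hBi (show transfer B w ∈ LinearMap.ker (bdry k B i) by
    rw [LinearMap.mem_ker, bdry_transfer_of_subset hA hAB, hw, map_zero])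
  obtain ⟨y, hy⟩ := hBA (show transfer (B \ A) u ∈ LinearMap.ker (bdry k (B \ A) (i + 1)) by
    rw [LinearMap.mem_ker, bdry_transfer_sdiff hA, hu]
    funext τ
    obtain ⟨hτB, hτA⟩ := Finset.mem_sdiff.mp τ.2.1
    rw [transfer_apply, coeff_transfer, if_pos hτB, coeff_eq_zero_of_notMem _ hτA, Pi.zero_apply])
  let v := u - bdry k B (i + 1 + 1) (transfer B y)
  have hv : transfer B (transfer A v) = v := by
    refine transfer_transfer_of_support_subset v fun τ hτA => ?_
    have hτ : τ.1 ∈ B \ A := Finset.mem_sdiff.mpr ⟨τ.2.1, hτA⟩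
    change u τ - bdry k B (i + 1 + 1) (transfer B y) τ = 0
    rw [bdry_transfer_apply y τ hτ fun _ h => (Finset.mem_sdiff.mp h).1, hy,
      transfer_apply, coeff_val, sub_self]
  refine ⟨transfer A v, transfer_injective hAB ?_⟩
  rw [← bdry_transfer_of_subset hA hAB, hv, map_sub, bdry_bdry hB, sub_zero, hu]

theorem IsComplex.lkF {Δ : Finset (Finset ℕ)} (hΔ : IsComplex Δ) (σ : Finset ℕ) :
    IsComplex (lkF Δ σ) := by
  intro τ hτ ρ hρ
  simp only [_root_.lkF, Finset.mem_filter] at hτ ⊢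
  obtain ⟨hτΔ, hστ, hdisj⟩ := hτ
  refine ⟨hΔ τ hτΔ ρ hρ, hΔ _ hστ _ (Finset.union_subset_union_right hρ), ?_⟩
  exact Finset.subset_empty.mp (hdisj ▸ Finset.inter_subset_inter le_rfl hρ)

theorem lkF_mono {Δ Γ : Finset (Finset ℕ)} (h : Δ ⊆ Γ) (σ : Finset ℕ) :
    lkF Δ σ ⊆ lkF Γ σ := by
  intro τ hτ
  simp only [lkF, Finset.mem_filter] at hτ ⊢
  exact ⟨h hτ.1, h hτ.2.1, hτ.2.2⟩

theorem not_subsingleton_redH_lkF_sdiff {Δ Γ : Finset (Finset ℕ)} (hΔ : IsComplex Δ)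
    (hΓ : IsComplex Γ) (hΔΓ : Δ ⊆ Γ) {σ : Finset ℕ} {i : ℤ}
    (hΓi : Subsingleton (redH k (lkF Γ σ) i)) (hΔi : ¬ Subsingleton (redH k (lkF Δ σ) i)) :
    ¬ Subsingleton (redH k (lkF Γ σ \ lkF Δ σ) (i + 1)) := fun hrel =>
  hΔi (subsingleton_redH_of_sdiff (hΔ.lkF σ) (hΓ.lkF σ) (lkF_mono hΔΓ σ) hΓi hrel)

end

theorem no_CM_extender_of_small_depth_general (k : Type) [Field k] (d : ℤ)
    (Δ : Finset (Finset ℕ)) (hΔ : IsComplex Δ) :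
    (¬ DepthGE k Δ d →
      ∀ Γ : Finset (Finset ℕ), IsComplex Γ → dimIs Γ d → IsCM k Γ d → Δ ⊆ Γ →
        ¬ RelCM k Γ Δ d) ∧
    (∀ σ ∈ Δ, ∀ i : ℤ,
      ¬ Subsingleton (redH k (lkF Δ σ) i) → (σ.card : ℤ) + i + 1 ≤ d - 1 →
      ∀ Γ : Finset (Finset ℕ), IsComplex Γ → dimIs Γ d → IsCM k Γ d → Δ ⊆ Γ →
        ¬ Subsingleton (redH k (lkF Γ σ \ lkF Δ σ) (i + 1)) ∧
          (σ.card : ℤ) + (i + 1) < d) := by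
  refine ⟨fun hdepth Γ hΓ _ hCM hΔΓ hrel => ?_,
    fun σ hσ i hΔi hi Γ hΓ _ hCM hΔΓ =>
      ⟨not_subsingleton_redH_lkF_sdiff hΔ hΓ hΔΓ (hCM σ (hΔΓ hσ) i (by omega)) hΔi, by omega⟩⟩
  obtain ⟨σ, hσ, i, hi, hΔi⟩ : ∃ σ ∈ Δ, ∃ i : ℤ, (σ.card : ℤ) + i + 1 < d ∧
      ¬ Subsingleton (redH k (lkF Δ σ) i) := by
    simpa [DepthGE] using hdepth
  exact not_subsingleton_redH_lkF_sdiff hΔ hΓ hΔΓ (hCM σ (hΔΓ hσ) i (by omega)) hΔi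
    (hrel σ (hΔΓ hσ) (i + 1) (by omega))

/-- If `Δ` is a `d`-dimensional complex with `depth k[Δ] < dim k[Δ] - 1 = d`, then `Δ` has
no Cohen–Macaulay extender: for every `d`-dimensional Cohen–Macaulay complex `Γ ⊇ Δ`,
the relative complex `(Γ,Δ)` is not relative Cohen–Macaulay.  Equivalently, if there are
a face `σ ∈ Δ` and an index `i` with `H̃_i(lk_Δ(σ); k) ≠ 0` and `|σ| + i + 1 ≤ d - 1`,
then for any `d`-dimensional Cohen–Macaulay `Γ ⊇ Δ` the relative homology
`H̃_{i+1}(lk_Γ(σ), lk_Δ(σ); k)` is nonzero with `|σ| + (i+1) < d`. -/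
theorem no_CM_extender_of_small_depth (k : Type) [Field k] (d : ℤ)
    (Δ : Finset (Finset ℕ)) (hΔ : IsComplex Δ) (hdim : dimIs Δ d) :
    (¬ DepthGE k Δ d →
      ∀ Γ : Finset (Finset ℕ), IsComplex Γ → dimIs Γ d → IsCM k Γ d → Δ ⊆ Γ →
        ¬ RelCM k Γ Δ d) ∧
    (∀ σ ∈ Δ, ∀ i : ℤ,
      ¬ Subsingleton (redH k (lkF Δ σ) i) → (σ.card : ℤ) + i + 1 ≤ d - 1 →
      ∀ Γ : Finset (Finset ℕ), IsComplex Γ → dimIs Γ d → IsCM k Γ d → Δ ⊆ Γ →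
        ¬ Subsingleton (redH k (lkF Γ σ \ lkF Δ σ) (i + 1)) ∧
          (σ.card : ℤ) + (i + 1) < d) :=
  no_CM_extender_of_small_depth_general k d Δ hΔ
end
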